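/- arXiv:1609.08720 — 10 statements merged into one kernel-verified Lean document; each statement's English description precedes it below -/
import Mathlib

section
/- For every integer d ≥ 2 and every integer k with 1 ≤ k ≤ d−1, the product P(k)·P(d−k) ≤ P(d−1), where P(n) = ∏_{j=0}^{n} C(n,j) is the product of the binomial coefficients in row n of Pascal's triangle. -/
open Finset

/-- `P n = ∏_{j=0}^{n} C(n,j)`. -/
def P (n : ℕ) : ℕ := ∏ j ∈ Finset.range (n + 1), n.choose j

lemma choose_shift (m j a : ℕ) : m.choose j ≤ (m + a).choose (j + a) := by
  induction a with
  | zero => simp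
  | succ a ih =>
    calc m.choose j ≤ (m + a).choose (j + a) := ih
      _ ≤ (m + a).choose (j + a) + (m + a).choose (j + a + 1) := Nat.le_add_right _ _
      _ = (m + a + 1).choose (j + a + 1) := (Nat.choose_succ_succ _ _).symm

lemma P_aux (k m : ℕ) : P (k + 1) * P (m + 1) ≤ P (k + 1 + m) := by
  have h1 : P (k + 1) = ∏ j ∈ range (k + 1), (k + 1).choose j := by
    rw [P, Finset.prod_range_succ, Nat.choose_self, mul_one]
  have h2 : P (m + 1) = ∏ j ∈ range (m + 1), (m + 1).choose (j + 1) := by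
    rw [P, Finset.prod_range_succ', Nat.choose_zero_right, mul_one]
  have h3 : P (k + 1 + m) = (∏ j ∈ range (k + 1), (k + 1 + m).choose j) *
      (∏ j ∈ range (m + 1), (k + 1 + m).choose (k + 1 + j)) := by
    rw [P, show k + 1 + m + 1 = (k + 1) + (m + 1) by ring, Finset.prod_range_add]
  rw [h1, h2, h3]
  refine Nat.mul_le_mul (Finset.prod_le_prod' fun j _ => ?_)
    (Finset.prod_le_prod' fun j _ => ?_)
  · exact Nat.choose_le_choose j (by omega)
  · simpa [show (m + 1) + k = k + 1 + m by ring, show (j + 1) + k = k + 1 + j by ring]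
      using choose_shift (m + 1) (j + 1) k

theorem stmt_0 (d k : ℕ) (hd : 2 ≤ d) (hk1 : 1 ≤ k) (hk2 : k ≤ d - 1) :
    P k * P (d - k) ≤ P (d - 1) := by
  obtain ⟨k', rfl⟩ : ∃ k', k = k' + 1 := ⟨k - 1, by omega⟩
  obtain ⟨m', hm⟩ : ∃ m', d - (k' + 1) = m' + 1 := ⟨d - k' - 2, by omega⟩
  rw [hm, show d - 1 = k' + 1 + m' by omega]
  exact P_aux k' m'
end

section
/- For every positive integer n, the product of binomial coefficients ∏_{j=0}^{n} C(n,j) equals ∏_{k=1}^{n} k^k / k!. -/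
open Finset

lemma P_key (n : ℕ) : P (n + 1) * (n + 1).factorial = (n + 1) ^ (n + 1) * P n := by
  unfold P
  rw [Finset.prod_range_succ' (fun j => (n + 1).choose j)]
  simp only [Nat.choose_zero_right, mul_one]
  rw [← Finset.prod_range_add_one_eq_factorial, ← Finset.prod_mul_distrib]
  have : ∀ j ∈ Finset.range (n + 1),
      (n + 1).choose (j + 1) * (j + 1) = (n + 1) * n.choose j := by
    intro j hj
    rw [← Nat.add_one_mul_choose_eq]
  rw [Finset.prod_congr rfl this, Finset.prod_mul_distrib, Finset.prod_const,
    Finset.card_range]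

theorem stmt_1 (n : ℕ) (hn : 1 ≤ n) :
    (P n : ℚ) = ∏ k ∈ Finset.Icc 1 n, (k : ℚ) ^ k / (Nat.factorial k : ℚ) := by
  induction n, hn using Nat.le_induction with
  | base => simp [P, Finset.prod_range_succ]
  | succ n hn ih =>
    rw [Finset.prod_Icc_succ_top (by omega)]
    have hkey := P_key n
    have hfac : ((n + 1).factorial : ℚ) ≠ 0 := by
      exact_mod_cast Nat.factorial_ne_zero (n + 1)
    have hP : (P (n + 1) : ℚ)
        = ((n + 1 : ℕ) : ℚ) ^ (n + 1) * (P n : ℚ) / ((n + 1).factorial : ℚ) := by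
      rw [eq_div_iff hfac]; exact_mod_cast congrArg (Nat.cast : ℕ → ℚ) hkey
    rw [hP, ih]
    push_cast
    ring
end

section
/- For every integer d ≥ 1, P(d) ≤ exp((d² + d)/2) / ((2π)^{d/2} · (d!)^{1/2}), where P(d) = ∏_{j=0}^{d} binomial(d, j). -/
open Finset Real

/-- Stirling's lower bound, from Mathlib's `stirlingSeq` results. -/
lemma sqrt_pi_le_stirlingSeq (n : ℕ) : Real.sqrt π ≤ Stirling.stirlingSeq (n + 1) :=
  Stirling.stirlingSeq'_antitone.le_of_tendsto
    (Stirling.tendsto_stirlingSeq_sqrt_pi.comp (Filter.tendsto_add_atTop_nat 1)) n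

lemma stirling_lower (n : ℕ) :
    Real.sqrt π * (Real.sqrt (2 * (n + 1) : ℝ) * (((n : ℝ) + 1) / Real.exp 1) ^ (n + 1))
      ≤ ((n + 1).factorial : ℝ) := by
  have h := sqrt_pi_le_stirlingSeq n
  rw [Stirling.stirlingSeq] at h
  push_cast at h
  have hpos : 0 < Real.sqrt (2 * ((n : ℝ) + 1)) * (((n : ℝ) + 1) / Real.exp 1) ^ (n + 1) := by
    positivity
  have := (le_div_iff₀ hpos).mp h
  push_cast
  linarith

/-- The key step inequality: `√(2π) · √(d+1) · (d+1)^d ≤ e^(d+1) · d!`. -/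
lemma step_ineq (d : ℕ) :
    Real.sqrt (2 * π) * Real.sqrt ((d : ℝ) + 1) * ((d : ℝ) + 1) ^ d
      ≤ Real.exp ((d : ℝ) + 1) * (d.factorial : ℝ) := by
  have h := stirling_lower d
  have h1 : (0:ℝ) < (d : ℝ) + 1 := by positivity
  have hexp : (0:ℝ) < Real.exp ((d : ℝ) + 1) := Real.exp_pos _
  have hsqrt : Real.sqrt (2 * ((d : ℝ) + 1)) = Real.sqrt 2 * Real.sqrt ((d : ℝ) + 1) :=
    Real.sqrt_mul (by norm_num) _
  have hsqrt2 : Real.sqrt (2 * π) = Real.sqrt 2 * Real.sqrt π :=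
    Real.sqrt_mul (by norm_num) _
  have hfac : ((d + 1).factorial : ℝ) = ((d : ℝ) + 1) * (d.factorial : ℝ) := by
    rw [Nat.factorial_succ]; push_cast; ring
  have hpow : (((d : ℝ) + 1) / Real.exp 1) ^ (d + 1)
      = ((d : ℝ) + 1) ^ d * ((d : ℝ) + 1) / Real.exp ((d : ℝ) + 1) := by
    rw [div_pow, ← Real.exp_nat_mul]
    push_cast
    ring_nf
  rw [hfac, hpow, hsqrt] at h
  push_cast at h
  apply le_of_mul_le_mul_right _ h1
  have h2 := mul_le_mul_of_nonneg_right h hexp.le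
  calc Real.sqrt (2 * π) * Real.sqrt ((d : ℝ) + 1) * ((d : ℝ) + 1) ^ d * ((d : ℝ) + 1)
      = Real.sqrt π * (Real.sqrt 2 * Real.sqrt ((d : ℝ) + 1) *
          (((d : ℝ) + 1) ^ d * ((d : ℝ) + 1) / Real.exp ((d : ℝ) + 1))) *
          Real.exp ((d : ℝ) + 1) := by
        rw [hsqrt2]; field_simp
    _ ≤ ((d : ℝ) + 1) * (d.factorial : ℝ) * Real.exp ((d : ℝ) + 1) := h2
    _ = Real.exp ((d : ℝ) + 1) * (d.factorial : ℝ) * ((d : ℝ) + 1) := by ring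

/-- Main inductive inequality. -/
lemma key (d : ℕ) (hd : 1 ≤ d) :
    (2 * π) ^ ((d : ℝ) / 2) * Real.sqrt (d.factorial) * (d.factorial : ℝ) ^ (d + 1)
      ≤ Real.exp (((d : ℝ) ^ 2 + d) / 2) *
        (∏ j ∈ Finset.range (d + 1), (j.factorial : ℝ)) ^ 2 := by
  induction d, hd using Nat.le_induction with
  | base =>
      simp only [Nat.factorial_one, Nat.cast_one, Real.sqrt_one]
      norm_num [Finset.prod_range_succ]
      rw [← Real.sqrt_eq_rpow]
      have hpi : π < 3.15 := Real.pi_lt_d2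
      have he : Real.exp 1 > 2.7 := by
        have := Real.exp_one_gt_d9
        linarith
      have h1 : Real.sqrt (2 * π) ≤ Real.sqrt (Real.exp 1 ^ 2) := by
        apply Real.sqrt_le_sqrt
        nlinarith
      rw [Real.sqrt_sq (le_of_lt (Real.exp_pos 1))] at h1
      exact h1
  | succ d hd ih =>
      have h2pi : (0:ℝ) < 2 * π := by positivity
      have hfd : (0:ℝ) < (d.factorial : ℝ) := by positivity
      have efac : ((d + 1).factorial : ℝ) = ((d : ℝ) + 1) * (d.factorial : ℝ) := by
        rw [Nat.factorial_succ]; push_cast; ring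
      have e1 : (2 * π : ℝ) ^ (((d : ℝ) + 1) / 2)
          = (2 * π) ^ ((d : ℝ) / 2) * Real.sqrt (2 * π) := by
        rw [show ((d : ℝ) + 1) / 2 = (d : ℝ) / 2 + 1 / 2 by ring, Real.rpow_add h2pi,
          Real.sqrt_eq_rpow]
      have e2 : Real.sqrt ((d + 1).factorial : ℝ)
          = Real.sqrt ((d : ℝ) + 1) * Real.sqrt (d.factorial : ℝ) := by
        rw [efac, Real.sqrt_mul (by positivity)]
      have e4 : Real.exp ((((d : ℝ) + 1) ^ 2 + ((d : ℝ) + 1)) / 2)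
          = Real.exp (((d : ℝ) ^ 2 + d) / 2) * Real.exp ((d : ℝ) + 1) := by
        rw [← Real.exp_add]; ring_nf
      have e5 : ∏ j ∈ Finset.range (d + 2), (j.factorial : ℝ)
          = (∏ j ∈ Finset.range (d + 1), (j.factorial : ℝ)) * ((d + 1).factorial : ℝ) :=
        Finset.prod_range_succ _ _
      have hstep : Real.sqrt (2 * π) * Real.sqrt ((d : ℝ) + 1) *
            (((d : ℝ) + 1) ^ (d + 2) * (d.factorial : ℝ))
          ≤ Real.exp ((d : ℝ) + 1) * (((d : ℝ) + 1) * (d.factorial : ℝ)) ^ 2 := by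
        have hnn : (0:ℝ) ≤ ((d : ℝ) + 1) ^ 2 * (d.factorial : ℝ) := by positivity
        have h' := mul_le_mul_of_nonneg_right (step_ineq d) hnn
        calc Real.sqrt (2 * π) * Real.sqrt ((d : ℝ) + 1) *
              (((d : ℝ) + 1) ^ (d + 2) * (d.factorial : ℝ))
            = Real.sqrt (2 * π) * Real.sqrt ((d : ℝ) + 1) * ((d : ℝ) + 1) ^ d *
              (((d : ℝ) + 1) ^ 2 * (d.factorial : ℝ)) := by ring
          _ ≤ Real.exp ((d : ℝ) + 1) * (d.factorial : ℝ) *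
              (((d : ℝ) + 1) ^ 2 * (d.factorial : ℝ)) := h'
          _ = Real.exp ((d : ℝ) + 1) * (((d : ℝ) + 1) * (d.factorial : ℝ)) ^ 2 := by ring
      push_cast
      calc (2 * π : ℝ) ^ (((d : ℝ) + 1) / 2) * Real.sqrt ((d + 1).factorial : ℝ) *
            ((d + 1).factorial : ℝ) ^ (d + 1 + 1)
          = ((2 * π) ^ ((d : ℝ) / 2) * Real.sqrt (d.factorial : ℝ) *
              (d.factorial : ℝ) ^ (d + 1)) *
            (Real.sqrt (2 * π) * Real.sqrt ((d : ℝ) + 1) *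
              (((d : ℝ) + 1) ^ (d + 2) * (d.factorial : ℝ))) := by
            rw [e1, e2, efac, mul_pow]; ring
        _ ≤ (Real.exp (((d : ℝ) ^ 2 + d) / 2) *
              (∏ j ∈ Finset.range (d + 1), (j.factorial : ℝ)) ^ 2) *
            (Real.exp ((d : ℝ) + 1) * (((d : ℝ) + 1) * (d.factorial : ℝ)) ^ 2) :=
            mul_le_mul ih hstep (by positivity) (by positivity)
        _ = Real.exp ((((d : ℝ) + 1) ^ 2 + ((d : ℝ) + 1)) / 2) *
            (∏ j ∈ Finset.range (d + 1 + 1), (j.factorial : ℝ)) ^ 2 := by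
            rw [e4, show d + 1 + 1 = d + 2 from rfl, e5, efac]; ring

lemma P_identity (d : ℕ) :
    P d * (∏ j ∈ Finset.range (d + 1), j.factorial) ^ 2 = d.factorial ^ (d + 1) := by
  have hrefl : ∏ j ∈ Finset.range (d + 1), (d - j).factorial
      = ∏ j ∈ Finset.range (d + 1), j.factorial := by
    have := Finset.prod_range_reflect (fun j => j.factorial) (d + 1)
    simpa using this
  calc P d * (∏ j ∈ Finset.range (d + 1), j.factorial) ^ 2
      = ∏ j ∈ Finset.range (d + 1),
          (d.choose j * j.factorial * (d - j).factorial) := by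
        rw [sq]
        nth_rewrite 2 [← hrefl]
        rw [P, ← Finset.prod_mul_distrib, ← Finset.prod_mul_distrib]
        exact Finset.prod_congr rfl fun j _ => by ring
    _ = ∏ j ∈ Finset.range (d + 1), d.factorial := by
        apply Finset.prod_congr rfl
        intro j hj
        exact Nat.choose_mul_factorial_mul_factorial (Nat.lt_succ_iff.mp (Finset.mem_range.mp hj))
    _ = d.factorial ^ (d + 1) := by
        rw [Finset.prod_const, Finset.card_range]

theorem stmt_2 (d : ℕ) (hd : 1 ≤ d) :
    (P d : ℝ) ≤ Real.exp (((d : ℝ) ^ 2 + d) / 2) /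
      ((2 * Real.pi) ^ ((d : ℝ) / 2) * Real.sqrt (Nat.factorial d)) := by
  have hS : (0:ℝ) < ∏ j ∈ Finset.range (d + 1), (j.factorial : ℝ) := by
    apply Finset.prod_pos
    intro j _
    exact_mod_cast Nat.factorial_pos j
  have hB : (0:ℝ) < (2 * π) ^ ((d : ℝ) / 2) * Real.sqrt (Nat.factorial d) := by
    have h2pi : (0:ℝ) < 2 * π := by positivity
    have : (0:ℝ) < Real.sqrt (Nat.factorial d) :=
      Real.sqrt_pos.mpr (by exact_mod_cast Nat.factorial_pos d)
    positivity
  rw [le_div_iff₀ hB]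
  have hPS : (P d : ℝ) * (∏ j ∈ Finset.range (d + 1), (j.factorial : ℝ)) ^ 2
      = (d.factorial : ℝ) ^ (d + 1) := by
    exact_mod_cast congrArg (Nat.cast : ℕ → ℝ) (P_identity d)
  apply le_of_mul_le_mul_right _ (pow_pos hS 2)
  calc (P d : ℝ) * ((2 * π) ^ ((d : ℝ) / 2) * Real.sqrt (Nat.factorial d)) *
        (∏ j ∈ Finset.range (d + 1), (j.factorial : ℝ)) ^ 2
      = (2 * π) ^ ((d : ℝ) / 2) * Real.sqrt (Nat.factorial d) *
        ((P d : ℝ) * (∏ j ∈ Finset.range (d + 1), (j.factorial : ℝ)) ^ 2) := by ring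
    _ = (2 * π) ^ ((d : ℝ) / 2) * Real.sqrt (Nat.factorial d) *
        (d.factorial : ℝ) ^ (d + 1) := by rw [hPS]
    _ ≤ Real.exp (((d : ℝ) ^ 2 + d) / 2) *
        (∏ j ∈ Finset.range (d + 1), (j.factorial : ℝ)) ^ 2 := key d hd
    _ = Real.exp (((d : ℝ) ^ 2 + d) / 2) *
        (∏ j ∈ Finset.range (d + 1), (j.factorial : ℝ)) ^ 2 := rfl
end

section
/- For all integers d ≥ 0, B(d) ≤ 2^{d²}, where B(d) = ∑_{k=0}^{d−1} P(k) P(d−k) γ(k)^{d−k−1} γ(d−k)^{k}, with P(n) = ∏_{j=0}^{n} binomial(n,j) and γ(k) = binomial(k, ⌊k/2⌋). -/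
open Finset

/-- `γ k = C(k, ⌊k/2⌋)`, the central binomial coefficient. -/
def γ (k : ℕ) : ℕ := k.choose (k / 2)

/-- `B d = ∑_{k=0}^{d-1} P(k) P(d-k) γ(k)^{d-k-1} γ(d-k)^k`. -/
def B (d : ℕ) : ℕ :=
  ∑ k ∈ Finset.range d, P k * P (d - k) * γ k ^ (d - k - 1) * γ (d - k) ^ k

lemma choose_le_two_pow (n j : ℕ) : n.choose j ≤ 2 ^ (n - 1) := by
  induction n generalizing j with
  | zero => cases j <;> simp [Nat.choose]
  | succ n ih =>
    match n, j with
    | _, 0 => simpa using Nat.one_le_two_pow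
    | 0, 1 => simp
    | 0, (j+2) => simp [Nat.choose]
    | (n+1), (j+1) =>
      calc (n+2).choose (j+1) = (n+1).choose j + (n+1).choose (j+1) := rfl
      _ ≤ 2 ^ n + 2 ^ n := Nat.add_le_add (ih j) (ih (j+1))
      _ = 2 ^ (n+1) := by ring

lemma P_le (n : ℕ) : P n ≤ 2 ^ (n * n - 1) := by
  have h1 : P n ≤ ∏ _j ∈ Finset.range (n + 1), 2 ^ (n - 1) :=
    Finset.prod_le_prod' (fun j _ => choose_le_two_pow n j)
  have h2 : ∏ _j ∈ Finset.range (n + 1), 2 ^ (n - 1) = 2 ^ ((n - 1) * (n + 1)) := by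
    rw [Finset.prod_const, Finset.card_range, ← pow_mul]
  have h3 : (n - 1) * (n + 1) ≤ n * n - 1 := by
    cases n with
    | zero => simp
    | succ m =>
      have e1 : m * (m + 1 + 1) = m * m + 2 * m := by ring
      have e2 : (m + 1) * (m + 1) = m * m + 2 * m + 1 := by ring
      simp only [Nat.succ_sub_one]
      omega
  calc P n ≤ 2 ^ ((n - 1) * (n + 1)) := h1.trans_eq h2
  _ ≤ 2 ^ (n * n - 1) := Nat.pow_le_pow_right (by norm_num) h3

lemma γ_le (n : ℕ) : γ n ≤ 2 ^ (n - 1) := choose_le_two_pow n (n / 2)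

lemma geom_sum_le (d N : ℕ) (h : d ≤ N) :
    ∑ k ∈ Finset.range d, 2 ^ (N - 1 - k) ≤ 2 ^ N - 2 ^ (N - d) := by
  induction d with
  | zero => simp
  | succ m ih =>
    rw [Finset.sum_range_succ]
    have hm : m ≤ N := Nat.le_of_succ_le h
    have ihm := ih hm
    have he : N - m = (N - m - 1) + 1 := by omega
    have h1 : 2 ^ (N - m) = 2 ^ (N - m - 1) + 2 ^ (N - m - 1) := by
      conv_lhs => rw [he]
      rw [pow_succ]; omega
    have h2 : N - 1 - m = N - m - 1 := by omega
    have h3 : N - (m + 1) = N - m - 1 := by omega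
    have h4 : 2 ^ (N - m) ≤ 2 ^ N := Nat.pow_le_pow_right (by norm_num) (by omega)
    rw [h2, h3]
    omega

lemma term_le (k m d : ℕ) (hd : d = k + m + 1) :
    P k * P (m + 1) * γ k ^ m * γ (m + 1) ^ k ≤ 2 ^ (d ^ 2 - 1 - k) := by
  subst hd
  have hb : P k * P (m + 1) * γ k ^ m * γ (m + 1) ^ k ≤
      2 ^ (k * k - 1) * 2 ^ ((m + 1) * (m + 1) - 1) * (2 ^ (k - 1)) ^ m * (2 ^ m) ^ k := by
    gcongr
    · exact P_le k
    · exact P_le (m + 1)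
    · exact γ_le k
    · simpa using γ_le (m + 1)
  have hb2 : 2 ^ (k * k - 1) * 2 ^ ((m + 1) * (m + 1) - 1) * (2 ^ (k - 1)) ^ m * (2 ^ m) ^ k
      = 2 ^ ((k * k - 1) + ((m + 1) * (m + 1) - 1) + (k - 1) * m + m * k) := by
    rw [← pow_mul, ← pow_mul, ← pow_add, ← pow_add, ← pow_add]
  have hexp : (k * k - 1) + ((m + 1) * (m + 1) - 1) + (k - 1) * m + m * k
      ≤ (k + m + 1) ^ 2 - 1 - k := by
    have e2 : (m + 1) * (m + 1) = m * m + 2 * m + 1 := by ring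
    have e3 : (k + m + 1) ^ 2 = k * k + m * m + 2 * (k * m) + 2 * k + 2 * m + 1 := by ring
    cases k with
    | zero =>
      simp only [Nat.zero_mul, Nat.mul_zero, Nat.zero_sub, Nat.zero_add] at e3 ⊢
      omega
    | succ a =>
      have e1 : (a + 1) * (a + 1) = a * a + 2 * a + 1 := by ring
      have e4 : (a + 1 + m + 1) ^ 2 =
          a * a + m * m + 2 * (a * m) + 4 * a + 4 * m + 4 := by ring
      have e5 : m * (a + 1) = m * a + m := by ring
      have e6 : a * m = m * a := by ring
      simp only [Nat.succ_sub_one, e1, e4, e5, e6]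
      omega
  calc P k * P (m + 1) * γ k ^ m * γ (m + 1) ^ k ≤ _ := hb
  _ = _ := hb2
  _ ≤ 2 ^ ((k + m + 1) ^ 2 - 1 - k) := Nat.pow_le_pow_right (by norm_num) hexp

theorem stmt_5 (d : ℕ) : B d ≤ 2 ^ (d ^ 2) := by
  have h1 : B d ≤ ∑ k ∈ Finset.range d, 2 ^ (d ^ 2 - 1 - k) := by
    apply Finset.sum_le_sum
    intro k hk
    have hk' := Finset.mem_range.mp hk
    obtain ⟨m, hm⟩ : ∃ m, d = k + m + 1 := ⟨d - k - 1, by omega⟩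
    have e1 : d - k = m + 1 := by omega
    have e2 : d - k - 1 = m := by omega
    rw [e2, e1]
    exact term_le k m d hm
  have hd : d ≤ d ^ 2 := Nat.le_self_pow (by norm_num) d
  have h2 := geom_sum_le d (d ^ 2) hd
  have h3 : 1 ≤ 2 ^ (d ^ 2 - d) := Nat.one_le_two_pow
  have h4 : 2 ^ (d ^ 2 - d) ≤ 2 ^ (d ^ 2) := Nat.pow_le_pow_right (by norm_num) (by omega)
  omega
end

section
/- For all integers d ≥ 0, ∏_{j=0}^{d} (2·binomial(d,j) + 1) ≤ (3159/1024) · 2^{d+1} · ∏_{j=0}^{d} binomial(d,j). -/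
open Finset

lemma pascal_weier_prod (x : ℕ → ℚ) (hx : ∀ j, 0 ≤ x j) (s : Finset ℕ) :
    (∏ j ∈ s, (1 + x j)) * (1 - ∑ j ∈ s, x j) ≤ 1 := by
  induction s using Finset.induction with
  | empty => simp
  | @insert a s ha ih =>
    rw [Finset.prod_insert ha, Finset.sum_insert ha]
    have hp : (0:ℚ) ≤ ∏ j ∈ s, (1 + x j) :=
      Finset.prod_nonneg fun j _ => by linarith [hx j]
    have hs : (0:ℚ) ≤ ∑ j ∈ s, x j := Finset.sum_nonneg fun j _ => hx j
    nlinarith [hx a, mul_nonneg (mul_nonneg hp (hx a)) hs,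
      mul_nonneg (mul_nonneg hp (hx a)) (hx a)]

lemma pascal_choose_ge_self (d : ℕ) : ∀ j, 1 ≤ j → j < d → d ≤ d.choose j := by
  induction d with
  | zero => intro j h1 h2; omega
  | succ d ih =>
    intro j h1 h2
    rcases Nat.exists_eq_add_of_le h1 with ⟨k, rfl⟩
    rcases eq_or_lt_of_le (Nat.lt_succ_iff.mp h2) with h | h
    · rw [← h, show 1 + k = k + 1 by omega, Nat.choose_succ_self_right]
    · rw [show 1 + k = k + 1 by omega, Nat.choose_succ_succ]
      simp only [Nat.succ_eq_add_one]
      rcases Nat.eq_zero_or_pos k with rfl | hk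
      · rw [Nat.choose_one_right, Nat.choose_zero_right]; omega
      · have h1' := ih k hk (by omega)
        have h2' := Nat.choose_pos (n := d) (k := k + 1) (by omega)
        omega

lemma pascal_two_choose_two (n : ℕ) : 2 * n.choose 2 = n * (n - 1) := by
  induction n with
  | zero => rfl
  | succ n ih =>
    rw [show (2:ℕ) = 1 + 1 by rfl, Nat.choose_succ_succ, Nat.choose_one_right]
    simp only [Nat.succ_eq_add_one, show (1:ℕ)+1 = 2 by rfl, Nat.add_sub_cancel] at *
    cases n with
    | zero => rfl
    | succ m =>
      simp only [Nat.add_sub_cancel] at *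
      have h1 : (m+1+1)*(m+1) = (m+1)*m + 2*(m+1) := by ring
      omega

lemma pascal_choose_ge_two (d : ℕ) : ∀ j, 2 ≤ j → j + 2 ≤ d → d * (d - 1) ≤ 2 * d.choose j := by
  induction d with
  | zero => intro j h1 h2; omega
  | succ d ih =>
    intro j h1 h2
    rcases Nat.exists_eq_add_of_le h1 with ⟨k, rfl⟩
    obtain ⟨m, rfl⟩ : ∃ m, d = m + 1 := ⟨d - 1, by omega⟩
    rcases eq_or_lt_of_le (show 2 + k ≤ m by omega) with h | h
    · have hsym : (m+1+1).choose (2+k) = (m+1+1).choose 2 := by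
        rw [show 2 + k = (m+1+1) - 2 by omega, Nat.choose_symm (by omega)]
      rw [hsym, pascal_two_choose_two]
    · rcases Nat.eq_zero_or_pos k with rfl | hk
      · rw [show 2 + 0 = 2 by rfl, pascal_two_choose_two]
      · rw [show 2 + k = (1 + k) + 1 by omega, Nat.choose_succ_succ]
        simp only [Nat.succ_eq_add_one, Nat.add_sub_cancel] at *
        have h1' := ih (1+k) (by omega) (by omega)
        have h2' := pascal_choose_ge_self (m+1) (1+k+1) (by omega) (by omega)
        have hr : (m+1+1) * (m+1) = (m+1) * m + 2*(m+1) := by ring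
        omega

lemma pascal_sum_bound (m : ℕ) (x : ℕ → ℚ)
    (hxd : x = fun j => 1 / (2 * (((m+6).choose j : ℕ) : ℚ))) :
    ∑ j ∈ Finset.Ico 1 (m+6), x j ≤ (2*(m:ℚ)+8)/(((m:ℚ)+6)*((m:ℚ)+5)) := by
  set M := (m:ℚ) with hM
  have hMpos : (0:ℚ) ≤ M := Nat.cast_nonneg m
  rw [Finset.sum_eq_sum_Ico_succ_bot (by omega : 1 < m + 6),
    show m + 6 = (m+5)+1 by omega, Finset.sum_Ico_succ_top (by omega : 2 ≤ m+5)]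
  have e1 : x 1 = 1/(2*(M+6)) := by
    rw [hxd]; simp [Nat.choose_one_right]
    try push_cast [hM]
    try ring_nf
  have e2 : x (m+5) = 1/(2*(M+6)) := by
    rw [hxd]
    simp only [show m+6 = (m+5)+1 by omega, Nat.choose_succ_self_right]
    try push_cast [hM]
    try ring_nf
  have emid : ∑ j ∈ Finset.Ico 2 (m+5), x j ≤ (M+3) * (1/((M+6)*(M+5))) := by
    have hcard : (Finset.Ico 2 (m+5)).card = m + 3 := by rw [Nat.card_Ico]; omega
    have := Finset.sum_le_card_nsmul (Finset.Ico 2 (m+5)) x (1/((M+6)*(M+5)))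
      (fun j hj => by
        obtain ⟨hj1, hj2⟩ := Finset.mem_Ico.mp hj
        have hn := pascal_choose_ge_two (m+6) j hj1 (by omega)
        have hq : (M+6)*(M+5) ≤ 2 * (((m+6).choose j : ℕ) : ℚ) := by
          have : ((m+6) * (m+5) : ℕ) ≤ (2 * (m+6).choose j : ℕ) := by
            simpa using hn
          rw [hM]
          exact_mod_cast this
        rw [hxd]
        exact one_div_le_one_div_of_le (by positivity) hq)
    rw [hcard, nsmul_eq_mul] at this
    push_cast at this ⊢
    linarith
  rw [e1, e2]
  have : (1:ℚ)/(2*(M+6)) + ((M+3) * (1/((M+6)*(M+5))) + 1/(2*(M+6)))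
      = (2*M+8)/((M+6)*(M+5)) := by
    field_simp
    ring
  linarith [emid]

theorem stmt_7 (d : ℕ) :
    (∏ j ∈ Finset.range (d + 1), (2 * (d.choose j : ℚ) + 1)) ≤
      (3159 / 1024 : ℚ) * 2 ^ (d + 1) * ∏ j ∈ Finset.range (d + 1), (d.choose j : ℚ) := by
  by_cases hd : d ≤ 5
  · interval_cases d <;> norm_num [Finset.prod_range_succ, Nat.choose]
  · obtain ⟨m, rfl⟩ : ∃ m, d = m + 6 := ⟨d - 6, by omega⟩
    clear hd
    set d := m + 6 with hdm
    set c : ℕ → ℚ := fun j => ((d.choose j : ℕ) : ℚ) with hc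
    set x : ℕ → ℚ := fun j => 1 / (2 * c j) with hxdef
    have hx0 : ∀ j, 0 ≤ x j := fun j => by
      simp only [hxdef, hc]; positivity
    have hcpos : ∀ j ∈ Finset.range (d+1), (0:ℚ) < c j := fun j hj => by
      simp only [hc]
      exact_mod_cast Nat.choose_pos (Nat.lt_succ_iff.mp (Finset.mem_range.mp hj))
    -- step 1: factor out 2 * c j from each term
    have step1 : (∏ j ∈ Finset.range (d + 1), (2 * c j + 1))
        = (2 ^ (d+1) * ∏ j ∈ Finset.range (d+1), c j) * ∏ j ∈ Finset.range (d+1), (1 + x j) := by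
      have : ∀ j ∈ Finset.range (d+1), 2 * c j + 1 = (2 * c j) * (1 + x j) := fun j hj => by
        have := hcpos j hj
        simp only [hxdef]
        field_simp
      rw [Finset.prod_congr rfl this, Finset.prod_mul_distrib, Finset.prod_mul_distrib,
        Finset.prod_const, Finset.card_range]
    -- step 2: split off endpoints
    have step2 : (∏ j ∈ Finset.range (d+1), (1 + x j))
        = (3/2) * (∏ j ∈ Finset.Ico 1 d, (1 + x j)) * (3/2) := by
      rw [Finset.range_eq_Ico, Finset.prod_eq_prod_Ico_succ_bot (by omega),
        Finset.prod_Ico_succ_top (by omega)]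
      have e0 : (1 + x 0) = 3/2 := by
        simp [hxdef, hc, Nat.choose_zero_right]; norm_num
      have ed : (1 + x d) = 3/2 := by
        simp [hxdef, hc, Nat.choose_self]; norm_num
      rw [e0, ed]; ring
    set M := (m:ℚ) with hM
    have hM0 : (0:ℚ) ≤ M := Nat.cast_nonneg m
    set P := ∏ j ∈ Finset.Ico 1 d, (1 + x j) with hP
    have hP0 : (0:ℚ) ≤ P :=
      Finset.prod_nonneg fun j _ => by linarith [hx0 j]
    set B : ℚ := (2*M+8)/((M+6)*(M+5)) with hB
    have hS : ∑ j ∈ Finset.Ico 1 d, x j ≤ B := by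
      have := pascal_sum_bound m x (by rw [hxdef, hc])
      rw [← hM] at this
      exact this
    have hw := pascal_weier_prod x hx0 (Finset.Ico 1 d)
    rw [← hP] at hw
    -- key: (9/4) * P ≤ 3159/1024
    have hden : (0:ℚ) < (M+6)*(M+5) := by positivity
    have h1B : (9:ℚ)/4 ≤ (3159/1024) * (1 - B) := by
      rw [hB, ← sub_nonneg]
      have hrw : (3159/1024 : ℚ) * (1 - (2*M+8)/((M+6)*(M+5))) - 9/4
          = (855*M^2 + 3087*M + 378) / (1024 * ((M+6)*(M+5))) := by
        field_simp
        ring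
      rw [hrw]
      positivity
    have key : (9:ℚ)/4 * P ≤ 3159/1024 := by
      nlinarith [mul_le_mul_of_nonneg_right h1B hP0,
        mul_nonneg hP0 (sub_nonneg.mpr hS), hw]
    -- conclude
    have hQ0 : (0:ℚ) ≤ 2 ^ (d+1) * ∏ j ∈ Finset.range (d+1), c j := by
      apply mul_nonneg (by positivity)
      exact Finset.prod_nonneg fun j hj => le_of_lt (hcpos j hj)
    calc (∏ j ∈ Finset.range (d + 1), (2 * c j + 1))
        = (2 ^ (d+1) * ∏ j ∈ Finset.range (d+1), c j) * ((3/2) * P * (3/2)) := by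
          rw [step1, step2]
      _ ≤ (2 ^ (d+1) * ∏ j ∈ Finset.range (d+1), c j) * (3159/1024) := by
          apply mul_le_mul_of_nonneg_left _ hQ0
          linarith [key]
      _ = (3159 / 1024 : ℚ) * 2 ^ (d + 1) * ∏ j ∈ Finset.range (d+1), c j := by ring
end

section
/- For all integers d ≥ 1, ∏_{j=1}^{d} (2·binomial(d,j) + 1) ≤ (1053/512) · 2^{d} · ∏_{j=0}^{d} binomial(d,j). -/
open Finset

-- product of (1+f) ≤ 1/(1-sum f)
lemma prod_one_add_le (s : Finset ℕ) (f : ℕ → ℚ) (h0 : ∀ i ∈ s, 0 ≤ f i)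
    (hs : ∑ i ∈ s, f i < 1) :
    ∏ i ∈ s, (1 + f i) ≤ 1 / (1 - ∑ i ∈ s, f i) := by
  induction s using Finset.cons_induction with
  | empty => simp
  | cons a s ha ih =>
    rw [Finset.prod_cons, Finset.sum_cons]
    rw [Finset.sum_cons] at hs
    have hfa : 0 ≤ f a := h0 a (Finset.mem_cons_self _ _)
    have hsum0 : 0 ≤ ∑ i ∈ s, f i :=
      Finset.sum_nonneg fun i hi => h0 i (Finset.mem_cons_of_mem hi)
    have hs' : ∑ i ∈ s, f i < 1 := by linarith
    have := ih (fun i hi => h0 i (Finset.mem_cons_of_mem hi)) hs'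
    have h1 : (0:ℚ) < 1 - ∑ i ∈ s, f i := by linarith
    have h2 : (0:ℚ) < 1 - (f a + ∑ i ∈ s, f i) := by linarith
    calc (1 + f a) * ∏ i ∈ s, (1 + f i) ≤ (1 + f a) * (1 / (1 - ∑ i ∈ s, f i)) := by
          apply mul_le_mul_of_nonneg_left this (by linarith)
      _ ≤ 1 / (1 - (f a + ∑ i ∈ s, f i)) := by
          rw [mul_one_div, div_le_div_iff₀ h1 h2]; nlinarith
  
-- choose monotone up to half
lemma choose_mono_half (n : ℕ) : ∀ b, ∀ a, a ≤ b → b ≤ n/2 → n.choose a ≤ n.choose b := by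
  intro b
  induction b with
  | zero => intro a h _; simp [Nat.le_zero.mp h]
  | succ k ih =>
    intro a h hb
    rcases Nat.lt_or_ge a (k+1) with h' | h'
    · exact (ih a (by omega) (by omega)).trans
        (Nat.choose_le_succ_of_lt_half_left (by omega))
    · have : a = k+1 := by omega
      simp [this]

lemma choose2_le (d j : ℕ) (h2 : 2 ≤ j) (hj : j ≤ d - 2) (hd : 4 ≤ d) :
    d.choose 2 ≤ d.choose j := by
  rcases le_or_gt j (d/2) with h | h
  · exact choose_mono_half d j 2 h2 h
  · have hjd : j ≤ d := by omega
    rw [← Nat.choose_symm hjd]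
    exact choose_mono_half d (d - j) 2 (by omega) (by omega)

theorem stmt_8 (d : ℕ) (hd : 1 ≤ d) :
    (∏ j ∈ Finset.Icc 1 d, (2 * (d.choose j : ℚ) + 1)) ≤
      (1053 / 512 : ℚ) * 2 ^ d * ∏ j ∈ Finset.range (d + 1), (d.choose j : ℚ) := by
  rcases le_or_gt d 5 with hsmall | hbig
  · interval_cases d <;>
      norm_num [Finset.prod_Icc_succ_top, Finset.prod_range_succ, Finset.Icc_self,
        Nat.choose]
  · -- d ≥ 6
    have hd6 : 6 ≤ d := hbig
    set C : ℕ → ℚ := fun j => (d.choose j : ℚ) with hC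
    have hCpos : ∀ j ∈ Finset.Icc 1 d, 0 < C j := by
      intro j hj
      simp only [Finset.mem_Icc] at hj
      simp only [hC]
      exact_mod_cast Nat.choose_pos hj.2
    set f : ℕ → ℚ := fun j => 1 / (2 * C j) with hf
    -- step 1: factor
    have step1 : (∏ j ∈ Finset.Icc 1 d, (2 * C j + 1)) =
        (∏ j ∈ Finset.Icc 1 d, (1 + f j)) * (2 ^ d * ∏ j ∈ Finset.Icc 1 d, C j) := by
      have : (2:ℚ) ^ d = ∏ _j ∈ Finset.Icc 1 d, (2:ℚ) := by
        rw [Finset.prod_const, Nat.card_Icc]; norm_num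
      rw [this, ← Finset.prod_mul_distrib, ← Finset.prod_mul_distrib]
      apply Finset.prod_congr rfl
      intro j hj
      have := hCpos j hj
      simp only [hf]; rw [add_mul, one_div_mul_cancel (ne_of_gt (by linarith))]; ring
    -- step 2: range product = Icc product
    have step2 : (∏ j ∈ Finset.range (d + 1), C j) = ∏ j ∈ Finset.Icc 1 d, C j := by
      rw [Finset.range_eq_Ico, Finset.Ico_add_one_right_eq_Icc,
        Finset.Icc_eq_cons_Ioc (Nat.zero_le d), Finset.prod_cons, ← Finset.Icc_add_one_left_eq_Ioc]
      simp [hC]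
    -- step 3: peel off j = d
    have h1 : d = d - 1 + 1 := by omega
    have hfd : 1 + f (d - 1 + 1) = 3 / 2 := by
      rw [← h1]; simp [hf, hC, Nat.choose_self]; norm_num
    have step3 : (∏ j ∈ Finset.Icc 1 d, (1 + f j)) =
        (∏ j ∈ Finset.Icc 1 (d - 1), (1 + f j)) * (3 / 2) := by
      conv_lhs => rw [h1]
      rw [Finset.prod_Icc_succ_top (by omega), hfd]
    set dq : ℚ := (d : ℚ) with hdq
    have hdq6 : (6:ℚ) ≤ dq := by rw [hdq]; exact_mod_cast hd6
    have hfnn : ∀ j ∈ Finset.Icc 1 (d-1), 0 ≤ f j := by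
      intro j hj
      simp only [Finset.mem_Icc] at hj
      have : 0 < C j := by
        simp only [hC]; exact_mod_cast Nat.choose_pos (by omega : j ≤ d)
      positivity
    -- sum bound
    set S : ℚ := ∑ j ∈ Finset.Icc 1 (d-1), f j with hS
    have hsplit : S = (f 1 + ∑ j ∈ Finset.Icc 2 (d-2), f j) + f (d-1) := by
      rw [hS, show d - 1 = (d - 2) + 1 by omega, Finset.sum_Icc_succ_top (by omega),
        Finset.Icc_eq_cons_Ioc (by omega : 1 ≤ d - 2), Finset.sum_cons, ← Finset.Icc_add_one_left_eq_Ioc]; rfl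
    have hf1 : f 1 = 1 / (2 * dq) := by simp [hf, hC, hdq]
    have hfd1 : f (d-1) = 1 / (2 * dq) := by
      have : d.choose (d - 1) = d.choose 1 := Nat.choose_symm (by omega : 1 ≤ d)
      simp [hf, hC, this, hdq]
    have hnat : ∀ j ∈ Finset.Icc 2 (d-2), d * (d - 1) ≤ 2 * d.choose j := by
      intro j hj
      simp only [Finset.mem_Icc] at hj
      have h2 : d.choose 2 ≤ d.choose j := choose2_le d j hj.1 hj.2 (by omega)
      have heven : 2 ∣ d * (d - 1) := by
        rcases Nat.even_or_odd d with h | h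
        · exact Dvd.dvd.mul_right h.two_dvd _
        · obtain ⟨k, hk⟩ := h
          exact Dvd.dvd.mul_left (⟨k, by omega⟩ : 2 ∣ (d-1)) _
      have h3 : 2 * d.choose 2 = d * (d - 1) := by
        rw [Nat.choose_two_right, Nat.mul_div_cancel' heven]
      omega
    have hmid : (∑ j ∈ Finset.Icc 2 (d-2), f j) ≤ (dq - 3) * (1 / (dq * (dq - 1))) := by
      have hcard : (Finset.Icc 2 (d-2)).card = d - 3 := by
        rw [Nat.card_Icc]; omega
      have hb : ∀ j ∈ Finset.Icc 2 (d-2), f j ≤ 1 / (dq * (dq - 1)) := by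
        intro j hj
        have hden : (0:ℚ) < dq * (dq - 1) := by nlinarith
        have hle : dq * (dq - 1) ≤ 2 * C j := by
          have := hnat j hj
          have hcast : ((d * (d - 1) : ℕ) : ℚ) = dq * (dq - 1) := by
            push_cast [Nat.cast_sub (by omega : 1 ≤ d)]; ring
          calc dq * (dq - 1) = ((d * (d - 1) : ℕ) : ℚ) := hcast.symm
            _ ≤ ((2 * d.choose j : ℕ) : ℚ) := by exact_mod_cast this
            _ = 2 * C j := by push_cast [hC]; ring
        rw [hf]
        exact one_div_le_one_div_of_le hden hle
      calc (∑ j ∈ Finset.Icc 2 (d-2), f j) ≤ (Finset.Icc 2 (d-2)).card • (1 / (dq * (dq - 1))) :=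
            Finset.sum_le_card_nsmul _ _ _ hb
        _ = ((d - 3 : ℕ) : ℚ) * (1 / (dq * (dq - 1))) := by rw [hcard, nsmul_eq_mul]
        _ = (dq - 3) * (1 / (dq * (dq - 1))) := by
            rw [Nat.cast_sub (by omega : 3 ≤ d)]; norm_num [hdq]
    have hSB : S ≤ 95 / 351 := by
      have hB : S ≤ 1 / (2 * dq) + (dq - 3) * (1 / (dq * (dq - 1))) + 1 / (2 * dq) := by
        rw [hsplit, hf1, hfd1]; linarith [hmid]
      have : 1 / (2 * dq) + (dq - 3) * (1 / (dq * (dq - 1))) + 1 / (2 * dq) ≤ 95 / 351 := by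
        have h0 : (0:ℚ) < dq := by linarith
        have h1' : (0:ℚ) < dq - 1 := by linarith
        rw [mul_one_div, div_add_div _ _ (by positivity) (by positivity),
          div_add_div _ _ (by positivity) (by positivity),
          div_le_div_iff₀ (by positivity) (by norm_num)]
        nlinarith [sq_nonneg (dq - 6), sq_nonneg dq, sq_nonneg (dq*(dq-6))]
      linarith
    have hS1 : S < 1 := by linarith
    have hprod : (∏ j ∈ Finset.Icc 1 (d-1), (1 + f j)) ≤ 351 / 256 := by
      have h2 := prod_one_add_le _ _ hfnn hS1
      have h3 : (1:ℚ) / (1 - S) ≤ 351 / 256 := by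
        have h4 : (256:ℚ)/351 ≤ 1 - S := by linarith
        calc (1:ℚ) / (1 - S) ≤ 1 / ((256:ℚ)/351) :=
              one_div_le_one_div_of_le (by norm_num) h4
          _ = 351 / 256 := by norm_num
      exact h2.trans h3
    have hfprod : (∏ j ∈ Finset.Icc 1 d, (1 + f j)) ≤ 1053 / 512 := by
      rw [step3]
      calc (∏ j ∈ Finset.Icc 1 (d-1), (1 + f j)) * (3/2) ≤ (351/256) * (3/2) := by
            apply mul_le_mul_of_nonneg_right hprod; norm_num
        _ = 1053 / 512 := by norm_num
    -- conclude
    have hprodC : (0:ℚ) ≤ 2 ^ d * ∏ j ∈ Finset.Icc 1 d, C j := by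
      apply mul_nonneg (by positivity)
      apply Finset.prod_nonneg
      intro j hj; exact le_of_lt (hCpos j hj)
    calc (∏ j ∈ Finset.Icc 1 d, (2 * C j + 1))
        = (∏ j ∈ Finset.Icc 1 d, (1 + f j)) * (2 ^ d * ∏ j ∈ Finset.Icc 1 d, C j) := step1
      _ ≤ (1053/512) * (2 ^ d * ∏ j ∈ Finset.Icc 1 d, C j) :=
          mul_le_mul_of_nonneg_right hfprod hprodC
      _ = (1053 / 512 : ℚ) * 2 ^ d * ∏ j ∈ Finset.range (d + 1), C j := by
          rw [step2, mul_assoc]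
end

section
/- The sequence V_d = 2^{d+1}(d+1)^s ∏_{j=1}^{s} (2j)^{d−2j}/(2j+1)^{d+1−2j}, with s = ⌊(d−1)/2⌋, tends to 0 as d → ∞. -/
open Finset Filter

/-- The Chern–Vaaler volume constant `V_d`. -/
noncomputable def V (d : ℕ) : ℝ :=
  2 ^ (d + 1) * ((d : ℝ) + 1) ^ ((d - 1) / 2) *
    ∏ j ∈ Finset.Icc 1 ((d - 1) / 2),
      (2 * (j : ℝ)) ^ (d - 2 * j) / (2 * (j : ℝ) + 1) ^ (d + 1 - 2 * j)

lemma V_pos (d : ℕ) : 0 < V d := by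
  unfold V
  apply mul_pos (mul_pos (by positivity) (by positivity))
  apply Finset.prod_pos
  intro j hj
  have hj1 : (1:ℝ) ≤ (j:ℝ) := by exact_mod_cast (Finset.mem_Icc.mp hj).1
  exact div_pos (pow_pos (by linarith) _) (pow_pos (by linarith) _)

lemma harm (s : ℕ) :
    (Real.log ((s:ℝ)+2) - Real.log 2) / 2 ≤ ∑ j ∈ Finset.Icc 1 s, 1 / (2*(j:ℝ)+1) := by
  induction s with
  | zero => simp
  | succ n ih =>
    rw [Finset.sum_Icc_succ_top (by omega : 1 ≤ n + 1)]
    have hlog : Real.log ((n:ℝ)+3) - Real.log ((n:ℝ)+2) ≤ 1/((n:ℝ)+2) := by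
      have h := Real.log_le_sub_one_of_pos (x := ((n:ℝ)+3)/((n:ℝ)+2)) (by positivity)
      rw [Real.log_div (by positivity) (ne_of_gt (by positivity))] at h
      have h2 : ((n:ℝ)+3)/((n:ℝ)+2) - 1 = 1/((n:ℝ)+2) := by field_simp; norm_num
      linarith
    have hfrac : 1/((n:ℝ)+2) ≤ 2 * (1 / (2*((n:ℝ)+1)+1)) := by
      rw [mul_one_div, div_le_div_iff₀ (by positivity) (by positivity)]
      nlinarith [Nat.cast_nonneg (α := ℝ) n]
    have hcast : ((n+1:ℕ):ℝ) = (n:ℝ)+1 := by push_cast; ring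
    rw [hcast]
    have h3 : (n:ℝ)+1+2 = (n:ℝ)+3 := by ring
    rw [h3]
    linarith

lemma logsum (s : ℕ) :
    (s:ℝ)/2 * Real.log ((s:ℝ)+1) ≤ ∑ j ∈ Finset.Icc 1 s, Real.log (2*(j:ℝ)+1) := by
  have hsub : Finset.Icc (s/2+1) s ⊆ Finset.Icc 1 s :=
    Finset.Icc_subset_Icc (by omega) le_rfl
  have h1 : ∑ j ∈ Finset.Icc (s/2+1) s, Real.log (2*(j:ℝ)+1)
      ≤ ∑ j ∈ Finset.Icc 1 s, Real.log (2*(j:ℝ)+1) := by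
    apply Finset.sum_le_sum_of_subset_of_nonneg hsub
    intro j hj _
    have : (1:ℝ) ≤ (j:ℝ) := by exact_mod_cast (Finset.mem_Icc.mp hj).1
    exact Real.log_nonneg (by linarith)
  have h2 : (Finset.Icc (s/2+1) s).card • Real.log ((s:ℝ)+1)
      ≤ ∑ j ∈ Finset.Icc (s/2+1) s, Real.log (2*(j:ℝ)+1) := by
    apply Finset.card_nsmul_le_sum
    intro j hj
    have hj' : s/2+1 ≤ j ∧ j ≤ s := Finset.mem_Icc.mp hj
    have h2j : s + 1 ≤ 2*j := by omega
    apply Real.log_le_log (by positivity)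
    have : ((s:ℝ)+1) ≤ 2*(j:ℝ) := by exact_mod_cast h2j
    linarith
  have hcard : (Finset.Icc (s/2+1) s).card = s - s/2 := by
    rw [Nat.card_Icc]; omega
  have hge : (s:ℝ)/2 ≤ ((s - s/2 : ℕ):ℝ) := by
    have h3 : ((s/2 : ℕ):ℝ) ≤ (s:ℝ)/2 := by
      have := Nat.cast_div_le (m := s) (n := 2) (α := ℝ)
      simpa using this
    rw [Nat.cast_sub (Nat.div_le_self s 2)]
    linarith
  have hlognn : 0 ≤ Real.log ((s:ℝ)+1) := Real.log_nonneg (by linarith [Nat.cast_nonneg (α := ℝ) s])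
  calc (s:ℝ)/2 * Real.log ((s:ℝ)+1)
      ≤ ((s - s/2 : ℕ):ℝ) * Real.log ((s:ℝ)+1) := by
        exact mul_le_mul_of_nonneg_right hge hlognn
    _ = (Finset.Icc (s/2+1) s).card • Real.log ((s:ℝ)+1) := by
        rw [hcard, nsmul_eq_mul]
    _ ≤ _ := le_trans h2 h1

lemma logV_le (d : ℕ) (hd : 1 ≤ d) :
    Real.log (V d) ≤ (4*(((d-1)/2 : ℕ):ℝ)+4) * Real.log 2 + (((d-1)/2 : ℕ):ℝ) -
      (((d-1)/2 : ℕ):ℝ)/2 * Real.log ((((d-1)/2 : ℕ):ℝ)+1) := by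
  set s := (d-1)/2 with hs
  have hd1 : 2*s + 1 ≤ d := by omega
  have hd2 : d ≤ 2*s + 2 := by omega
  -- Step 1 : expand the logarithm
  have hV : Real.log (V d) = ((d:ℝ)+1) * Real.log 2 + (s:ℝ) * Real.log ((d:ℝ)+1)
      + ∑ j ∈ Finset.Icc 1 s,
          (((d - 2*j : ℕ):ℝ) * Real.log (2*(j:ℝ)) - ((d+1-2*j : ℕ):ℝ) * Real.log (2*(j:ℝ)+1)) := by
    have hprodpos : ∀ j ∈ Finset.Icc 1 s,
        (2 * (j : ℝ)) ^ (d - 2 * j) / (2 * (j : ℝ) + 1) ^ (d + 1 - 2 * j) ≠ 0 := by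
      intro j hj
      have hj1 : (1:ℝ) ≤ (j:ℝ) := by exact_mod_cast (Finset.mem_Icc.mp hj).1
      have := div_pos (pow_pos (by linarith : (0:ℝ) < 2*(j:ℝ)) (d - 2*j))
        (pow_pos (by linarith : (0:ℝ) < 2*(j:ℝ)+1) (d+1-2*j))
      exact ne_of_gt this
    unfold V
    rw [Real.log_mul (by positivity) (Finset.prod_ne_zero_iff.mpr hprodpos),
        Real.log_mul (by positivity) (by positivity),
        Real.log_pow, Real.log_pow, Real.log_prod hprodpos]
    push_cast
    congr 1
    apply Finset.sum_congr rfl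
    intro j hj
    have hj1 : (1:ℝ) ≤ (j:ℝ) := by exact_mod_cast (Finset.mem_Icc.mp hj).1
    rw [Real.log_div (ne_of_gt (pow_pos (by linarith) _)) (ne_of_gt (pow_pos (by linarith) _)),
        Real.log_pow, Real.log_pow]
  rw [hV]
  -- Step 2 : per-term bound
  have hterm : ∀ j ∈ Finset.Icc 1 s,
      ((d - 2*j : ℕ):ℝ) * Real.log (2*(j:ℝ)) - ((d+1-2*j : ℕ):ℝ) * Real.log (2*(j:ℝ)+1)
        ≤ -(((d:ℝ)+1) * (1/(2*(j:ℝ)+1))) + 1 - Real.log (2*(j:ℝ)+1) := by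
    intro j hj
    obtain ⟨hj1, hj2⟩ := Finset.mem_Icc.mp hj
    have h2j : 2*j ≤ d := by omega
    have h2j' : 2*j ≤ d + 1 := by omega
    have hc1 : ((d - 2*j : ℕ):ℝ) = (d:ℝ) - 2*(j:ℝ) := by
      rw [Nat.cast_sub h2j]; push_cast; ring
    have hc2 : ((d + 1 - 2*j : ℕ):ℝ) = (d:ℝ) + 1 - 2*(j:ℝ) := by
      rw [Nat.cast_sub h2j']; push_cast; ring
    have hjr : (1:ℝ) ≤ (j:ℝ) := by exact_mod_cast hj1
    set x : ℝ := 2*(j:ℝ) with hx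
    have hx2 : (2:ℝ) ≤ x := by simp [hx]; linarith
    have hxd : x ≤ (d:ℝ) - 1 := by
      have : (2*j:ℕ) + 1 ≤ d := by omega
      have := (Nat.cast_le (α := ℝ)).mpr this
      push_cast at this
      simp [hx]; linarith
    have hlog : Real.log x - Real.log (x+1) ≤ -(1/(x+1)) := by
      have h := Real.log_le_sub_one_of_pos (x := x/(x+1)) (by positivity)
      rw [Real.log_div (by positivity) (ne_of_gt (by positivity))] at h
      have h2 : x/(x+1) - 1 = -(1/(x+1)) := by field_simp; ring
      linarith
    rw [hc1, hc2]
    have hnn : (0:ℝ) ≤ (d:ℝ) - x := by linarith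
    have hmul : ((d:ℝ) - x) * (Real.log x - Real.log (x+1))
        ≤ ((d:ℝ) - x) * (-(1/(x+1))) := by
      exact mul_le_mul_of_nonneg_left hlog hnn
    have hxp : (0:ℝ) < x + 1 := by linarith
    have hiden : ((d:ℝ) - x) * (-(1/(x+1))) = -(((d:ℝ)+1) * (1/(x+1))) + 1 := by
      field_simp
      ring
    have expand : ((d:ℝ) - 2*(j:ℝ)) * Real.log (2*(j:ℝ)) - ((d:ℝ) + 1 - 2*(j:ℝ)) * Real.log (2*(j:ℝ)+1)
        = ((d:ℝ) - x) * (Real.log x - Real.log (x+1)) - Real.log (x+1) := by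
      rw [hx]; ring
    rw [expand]
    rw [hiden] at hmul
    linarith
  have hsumle := Finset.sum_le_sum hterm
  -- Step 3 : evaluate the bounding sum
  have hsum : ∑ j ∈ Finset.Icc 1 s,
      (-(((d:ℝ)+1) * (1/(2*(j:ℝ)+1))) + 1 - Real.log (2*(j:ℝ)+1))
      = -(((d:ℝ)+1) * ∑ j ∈ Finset.Icc 1 s, 1/(2*(j:ℝ)+1)) + (s:ℝ)
        - ∑ j ∈ Finset.Icc 1 s, Real.log (2*(j:ℝ)+1) := by
    rw [Finset.sum_sub_distrib, Finset.sum_add_distrib, Finset.sum_const, Nat.card_Icc,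
        Finset.sum_neg_distrib, ← Finset.mul_sum]
    simp
  rw [hsum] at hsumle
  -- Step 4 : combine everything
  have hH := harm s
  have hL := logsum s
  set H := ∑ j ∈ Finset.Icc 1 s, 1/(2*(j:ℝ)+1) with hHdef
  set L := ∑ j ∈ Finset.Icc 1 s, Real.log (2*(j:ℝ)+1) with hLdef
  have hc : (0:ℝ) ≤ Real.log 2 := Real.log_nonneg one_le_two
  have hSnn : (0:ℝ) ≤ (s:ℝ) := Nat.cast_nonneg s
  have hl2c : Real.log 2 ≤ Real.log ((s:ℝ)+2) := Real.log_le_log (by norm_num) (by linarith)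
  have hDlow : 2*(s:ℝ)+2 ≤ (d:ℝ)+1 := by
    have := (Nat.cast_le (α := ℝ)).mpr hd1; push_cast at this; linarith
  have hDhigh : (d:ℝ)+1 ≤ 2*(s:ℝ)+3 := by
    have := (Nat.cast_le (α := ℝ)).mpr hd2; push_cast at this; linarith
  have hDH : (2*(s:ℝ)+2) * ((Real.log ((s:ℝ)+2) - Real.log 2)/2) ≤ ((d:ℝ)+1) * H := by
    apply mul_le_mul hDlow hH (by linarith) (by linarith)
  have hld : Real.log ((d:ℝ)+1) ≤ Real.log 2 + Real.log ((s:ℝ)+2) := by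
    rw [← Real.log_mul (by norm_num) (by positivity)]
    apply Real.log_le_log (by positivity)
    linarith
  have hSld : (s:ℝ) * Real.log ((d:ℝ)+1) ≤ (s:ℝ) * (Real.log 2 + Real.log ((s:ℝ)+2)) :=
    mul_le_mul_of_nonneg_left hld hSnn
  have hl21 : Real.log ((s:ℝ)+2) ≤ Real.log 2 + Real.log ((s:ℝ)+1) := by
    rw [← Real.log_mul (by norm_num) (by positivity)]
    apply Real.log_le_log (by positivity)
    linarith
  have hl2nn : (0:ℝ) ≤ Real.log ((s:ℝ)+2) := Real.log_nonneg (by linarith)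
  have hl1nn : (0:ℝ) ≤ Real.log ((s:ℝ)+1) := Real.log_nonneg (by linarith)
  have hDc : ((d:ℝ)+1) * Real.log 2 ≤ (2*(s:ℝ)+3) * Real.log 2 :=
    mul_le_mul_of_nonneg_right hDhigh hc
  have hSl21 : (s:ℝ)/2 * Real.log ((s:ℝ)+2) ≥ (s:ℝ)/2 * Real.log ((s:ℝ)+1) := by
    apply mul_le_mul_of_nonneg_left (Real.log_le_log (by positivity) (by linarith)) (by linarith)
  nlinarith [hDH, hSld, hsumle]

lemma G_tendsto : Tendsto (fun n : ℕ => (4*(n:ℝ)+4) * Real.log 2 + (n:ℝ)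
    - (n:ℝ)/2 * Real.log ((n:ℝ)+1)) atTop atBot := by
  have hlog : Tendsto (fun n : ℕ => Real.log ((n:ℝ)+1)) atTop atTop :=
    Real.tendsto_log_atTop.comp (tendsto_atTop_add_const_right atTop 1 tendsto_natCast_atTop_atTop)
  have hev : ∀ᶠ n : ℕ in atTop, (4*(n:ℝ)+4) * Real.log 2 + (n:ℝ)
      - (n:ℝ)/2 * Real.log ((n:ℝ)+1) ≤ 4 * Real.log 2 - (n:ℝ) := by
    filter_upwards [hlog.eventually_ge_atTop (8 * Real.log 2 + 4)] with n hn
    have hnn : (0:ℝ) ≤ (n:ℝ)/2 := by positivity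
    have := mul_le_mul_of_nonneg_left hn hnn
    nlinarith
  have hbot : Tendsto (fun n : ℕ => 4 * Real.log 2 - (n:ℝ)) atTop atBot := by
    apply tendsto_atBot_add_const_left
    exact tendsto_neg_atBot_iff.mpr tendsto_natCast_atTop_atTop
  exact tendsto_atBot_mono' atTop hev hbot

theorem stmt_9 : Filter.Tendsto V Filter.atTop (nhds 0) := by
  have hs : Tendsto (fun d : ℕ => (d-1)/2) atTop atTop := by
    apply tendsto_atTop_atTop.mpr
    intro b
    exact ⟨2*b+1, fun a ha => by omega⟩
  have hF : Tendsto (fun d : ℕ => (4*(((d-1)/2 : ℕ):ℝ)+4) * Real.log 2 + (((d-1)/2 : ℕ):ℝ) -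
      (((d-1)/2 : ℕ):ℝ)/2 * Real.log ((((d-1)/2 : ℕ):ℝ)+1)) atTop atBot :=
    G_tendsto.comp hs
  have hlogV : Tendsto (fun d => Real.log (V d)) atTop atBot := by
    apply tendsto_atBot_mono' atTop _ hF
    filter_upwards [eventually_ge_atTop 1] with d hd
    exact logV_le d hd
  have := Real.tendsto_exp_atBot.comp hlogV
  have heq : (fun d => Real.exp (Real.log (V d))) = V := by
    funext d
    exact Real.exp_log (V_pos d)
  rwa [Function.comp_def, heq] at this
end

section
/- Lipschitz-type lattice counting principle: Let S ⊂ ℝⁿ be a set whose boundary ∂S is contained in the images of finitely many maps φ_i : J_i → ℝⁿ (i in a finite index set I), and suppose each J_i can be covered by m_i sets T_{i,1}, …, T_{i,m_i} such that each image φ_i(T_{i,j}) is contained in some translate of [0,1]ⁿ. Then |#(S ∩ ℤⁿ) − vol_n(S)| ≤ 2ⁿ ∑_{i∈I} m_i. -/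
open MeasureTheory Set

/-- Lipschitz-type lattice point counting principle (Spain's refinement):
if the boundary of a bounded measurable set `S ⊆ ℝⁿ` is covered by the images of
finitely many maps `φ i : J i → ℝⁿ`, and each domain `J i` is covered by `m i` sets
whose images under `φ i` each fit inside some translate of the unit cube `[0,1]ⁿ`,
then the number of integer lattice points in `S` differs from the volume of `S`
by at most `2ⁿ ∑ i, m i`. -/
theorem stmt_16 (n : ℕ) (S : Set (Fin n → ℝ))
    (hSb : Bornology.IsBounded S) (hSm : MeasurableSet S)
    (ι : Type*) [Fintype ι] (J : ι → Type*) (φ : ∀ i, J i → (Fin n → ℝ))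
    (m : ι → ℕ) (T : ∀ i, Fin (m i) → Set (J i))
    (hcover : ∀ i, (⋃ j, T i j) = Set.univ)
    (himg : ∀ i j, ∃ v : Fin n → ℝ,
      φ i '' T i j ⊆ {x | ∀ k, v k ≤ x k ∧ x k ≤ v k + 1})
    (hbdry : frontier S ⊆ ⋃ i, Set.range (φ i)) :
    |({x ∈ S | ∀ k, ∃ a : ℤ, x k = (a : ℝ)}.ncard : ℝ) - (volume S).toReal| ≤
      2 ^ n * ∑ i, (m i : ℝ) := by
  classical
  -- the embedding of lattice points
  set ev : (Fin n → ℤ) → (Fin n → ℝ) := fun v k => (v k : ℝ) with hev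
  have hev_inj : Function.Injective ev := by
    intro a b h
    funext k
    have h2 : ((a k : ℝ)) = (b k : ℝ) := congrFun h k
    exact_mod_cast h2
  -- the grid cubes
  set C : (Fin n → ℤ) → Set (Fin n → ℝ) :=
    fun v => Set.univ.pi fun k => Set.Ico (v k : ℝ) ((v k : ℝ) + 1) with hCdef
  have hmemC : ∀ (v : Fin n → ℤ) (x : Fin n → ℝ), x ∈ C v ↔ ∀ k, ⌊x k⌋ = v k := by
    intro v x
    simp only [hCdef, Set.mem_pi, Set.mem_univ, forall_true_left, Set.mem_Ico]
    exact forall_congr' fun k => (Int.floor_eq_iff).symm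
  have hCm : ∀ v, MeasurableSet (C v) :=
    fun v => MeasurableSet.univ_pi fun k => measurableSet_Ico
  have hCvol : ∀ v, volume (C v) = 1 := by
    intro v
    rw [hCdef]
    rw [volume_pi_pi]
    simp [Real.volume_Ico]
  have hself : ∀ v, ev v ∈ C v := by
    intro v
    rw [hmemC]
    intro k
    simp [hev]
  have hCdisj : Pairwise (Function.onFun Disjoint C) := by
    intro v w hvw
    refine Set.disjoint_left.2 fun x hxv hxw => hvw ?_
    funext k
    rw [← (hmemC v x).1 hxv k, ← (hmemC w x).1 hxw k]
  -- bounding box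
  obtain ⟨R₀, hR₀⟩ := hSb.subset_closedBall 0
  set R : ℝ := max R₀ 0 with hRdef
  have hR : S ⊆ Metric.closedBall 0 R :=
    hR₀.trans (Metric.closedBall_subset_closedBall (le_max_left _ _))
  have hR0 : (0:ℝ) ≤ R := le_max_right _ _
  set M : ℤ := ⌈R⌉ + 1 with hMdef
  have hxM : ∀ x ∈ S, ∀ k, ⌊x k⌋ ∈ Finset.Icc (-M) M := by
    intro x hx k
    have hd : dist x 0 ≤ R := hR hx
    have hk : |x k| ≤ R := by
      have := (dist_pi_le_iff hR0).1 hd k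
      simpa [Real.dist_eq] using this
    have h1 : x k ≤ R := (abs_le.1 hk).2
    have h2 : -R ≤ x k := (abs_le.1 hk).1
    have hRM : R ≤ (M : ℝ) := by
      rw [hMdef]
      push_cast
      linarith [Int.le_ceil R]
    refine Finset.mem_Icc.2 ⟨?_, ?_⟩
    · rw [Int.le_floor]
      push_cast
      linarith
    · have := Int.floor_le_floor (le_trans h1 hRM)
      simpa using this
  set F : Finset (Fin n → ℤ) := Fintype.piFinset fun _ : Fin n => Finset.Icc (-M) M with hFdef
  have hSF : S ⊆ ⋃ v ∈ F, C v := by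
    intro x hx
    simp only [Set.mem_iUnion]
    exact ⟨fun k => ⌊x k⌋, Fintype.mem_piFinset.2 (hxM x hx), (hmemC _ x).2 fun k => rfl⟩
  -- the volume decomposition
  have hvolS : volume S = ∑ v ∈ F, volume (S ∩ C v) := by
    have hEq : S = ⋃ v ∈ F, (S ∩ C v) := by
      rw [← Set.inter_iUnion₂]
      exact (Set.inter_eq_self_of_subset_left hSF).symm
    have h2 : volume (⋃ v ∈ F, (S ∩ C v)) = ∑ v ∈ F, volume (S ∩ C v) :=
      measure_biUnion_finset
        (fun v _ w _ hvw => (hCdisj hvw).mono inf_le_right inf_le_right)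
        (fun v _ => hSm.inter (hCm v))
    rw [← hEq] at h2
    exact h2
  have hfin : ∀ v, volume (S ∩ C v) ≠ ⊤ := by
    intro v
    have : volume (S ∩ C v) ≤ 1 := by
      rw [← hCvol v]; exact measure_mono Set.inter_subset_right
    exact (lt_of_le_of_lt this ENNReal.one_lt_top).ne
  -- real-valued quantities
  set a : (Fin n → ℤ) → ℝ := fun v => if ev v ∈ S then 1 else 0 with hadef
  set b : (Fin n → ℤ) → ℝ := fun v => (volume (S ∩ C v)).toReal with hbdef
  have hsum_b : (volume S).toReal = ∑ v ∈ F, b v := by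
    rw [hvolS, ENNReal.toReal_sum fun v _ => hfin v]
  -- counting lattice points
  have hA : {x ∈ S | ∀ k, ∃ a : ℤ, x k = (a : ℝ)} = ev '' {v | ev v ∈ S} := by
    ext x
    constructor
    · rintro ⟨hxS, hint⟩
      choose c hc using hint
      have hevc : ev c = x := funext fun k => (hc k).symm
      exact ⟨c, show ev c ∈ S by rw [hevc]; exact hxS, hevc⟩
    · rintro ⟨v, hvS, rfl⟩
      exact ⟨hvS, fun k => ⟨v k, rfl⟩⟩
  have hAcard : ({x ∈ S | ∀ k, ∃ a : ℤ, x k = (a : ℝ)}.ncard : ℝ)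
      = ∑ v ∈ F, a v := by
    have h1 : {v | ev v ∈ S} = ↑(F.filter fun v => ev v ∈ S) := by
      ext v
      simp only [Set.mem_setOf_eq, Finset.coe_filter, Set.mem_setOf_eq, Finset.mem_filter]
      refine ⟨fun h => ⟨?_, h⟩, fun h => h.2⟩
      refine Fintype.mem_piFinset.2 fun k => ?_
      have := hxM (ev v) h k
      simpa [hev] using this
    rw [hA, Set.ncard_image_of_injective _ hev_inj, h1, Set.ncard_coe_finset]
    rw [Finset.card_filter]
    push_cast
    rfl
  -- per-cube estimate
  have hterm : ∀ v ∈ F, |a v - b v| ≤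
      (if (C v ∩ frontier S).Nonempty then (1:ℝ) else 0) := by
    intro v _
    by_cases h : (C v ∩ frontier S).Nonempty
    · rw [if_pos h]
      have hb0 : 0 ≤ b v := ENNReal.toReal_nonneg
      have hb1 : b v ≤ 1 := by
        rw [hbdef]
        have : volume (S ∩ C v) ≤ 1 := by
          rw [← hCvol v]; exact measure_mono Set.inter_subset_right
        calc (volume (S ∩ C v)).toReal ≤ (1 : ENNReal).toReal :=
              ENNReal.toReal_mono (by simp) this
          _ = 1 := by simp
      by_cases hvS : ev v ∈ S
      · have ha1 : a v = 1 := if_pos hvS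
        rw [ha1, abs_le]
        constructor <;> linarith
      · have ha0 : a v = 0 := if_neg hvS
        rw [ha0, abs_le]
        constructor <;> linarith
    · rw [if_neg h]
      have hsub : C v ⊆ interior S ∪ (closure S)ᶜ := by
        intro x hx
        by_cases hi : x ∈ interior S
        · exact Or.inl hi
        · by_cases hcl : x ∈ closure S
          · exact absurd ⟨x, hx, ⟨hcl, hi⟩⟩ h
          · exact Or.inr hcl
      have hconv : Convex ℝ (C v) := convex_pi fun k _ => convex_Ico _ _
      have hdisj : Disjoint (interior S) ((closure S)ᶜ) :=
        disjoint_compl_right.mono_left interior_subset_closure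
      rcases hconv.isPreconnected.subset_or_subset isOpen_interior
          isClosed_closure.isOpen_compl hdisj hsub with h1 | h2
      · have hCS : C v ⊆ S := h1.trans interior_subset
        have ha1 : a v = 1 := if_pos (hCS (hself v))
        have hb1 : b v = 1 := by
          rw [hbdef]
          dsimp only
          rw [Set.inter_eq_self_of_subset_right hCS, hCvol v]
          simp
        rw [ha1, hb1]
        simp
      · have hvnS : ev v ∉ S := fun hS => (h2 (hself v)) (subset_closure hS)
        have ha0 : a v = 0 := if_neg hvnS
        have hb0 : b v = 0 := by
          rw [hbdef]
          dsimp only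
          have : S ∩ C v = ∅ := by
            ext x
            simp only [Set.mem_inter_iff, Set.mem_empty_iff_false, iff_false, not_and]
            intro hxS hxC
            exact (h2 hxC) (subset_closure hxS)
          rw [this]
          simp
        rw [ha0, hb0]
        simp
  -- cubes near each translate of the unit cube
  set w : ∀ i, Fin (m i) → (Fin n → ℝ) := fun i j => (himg i j).choose with hwdef
  have hw : ∀ i j, φ i '' T i j ⊆ {x | ∀ k, w i j k ≤ x k ∧ x k ≤ w i j k + 1} :=
    fun i j => (himg i j).choose_spec
  set G : (Σ i, Fin (m i)) → Finset (Fin n → ℤ) :=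
    fun p => Fintype.piFinset fun k =>
      Finset.Icc (⌊w p.1 p.2 k + 1⌋ - 1) ⌊w p.1 p.2 k + 1⌋ with hGdef
  have hGcard : ∀ p, (G p).card ≤ 2 ^ n := by
    intro p
    have hcards : ∀ k : Fin n,
        (Finset.Icc (⌊w p.1 p.2 k + 1⌋ - 1) ⌊w p.1 p.2 k + 1⌋).card = 2 := by
      intro k
      rw [Int.card_Icc]
      omega
    have : (G p).card
        = ∏ k : Fin n, (Finset.Icc (⌊w p.1 p.2 k + 1⌋ - 1) ⌊w p.1 p.2 k + 1⌋).card := by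
      rw [hGdef]
      exact Fintype.card_piFinset _
    rw [this, Finset.prod_congr rfl fun k _ => hcards k, Finset.prod_const,
      Finset.card_univ, Fintype.card_fin]
  have hBsub : (F.filter fun v => (C v ∩ frontier S).Nonempty)
      ⊆ Finset.univ.biUnion fun p : Σ i, Fin (m i) => G p := by
    intro v hv
    obtain ⟨x, hxC, hxFr⟩ := Finset.mem_filter.1 hv |>.2
    obtain ⟨i, y, rfl⟩ : ∃ i y, φ i y = x := by
      have := hbdry hxFr
      simp only [Set.mem_iUnion, Set.mem_range] at this
      obtain ⟨i, y, hy⟩ := this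
      exact ⟨i, y, hy⟩
    obtain ⟨j, hyT⟩ : ∃ j, y ∈ T i j := by
      have : y ∈ ⋃ j, T i j := (hcover i).symm ▸ Set.mem_univ y
      simpa using this
    have hwx : ∀ k, w i j k ≤ φ i y k ∧ φ i y k ≤ w i j k + 1 :=
      hw i j ⟨y, hyT, rfl⟩
    have hvx : ∀ k, (v k : ℝ) ≤ φ i y k ∧ φ i y k < v k + 1 := by
      intro k
      have := (hmemC v (φ i y)).1 hxC k
      constructor
      · rw [← this]; exact Int.floor_le _
      · rw [← this]; exact Int.lt_floor_add_one _
    refine Finset.mem_biUnion.2 ⟨⟨i, j⟩, Finset.mem_univ _, ?_⟩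
    show v ∈ Fintype.piFinset fun k => Finset.Icc (⌊w i j k + 1⌋ - 1) ⌊w i j k + 1⌋
    refine Fintype.mem_piFinset.2 fun k => Finset.mem_Icc.2 ⟨?_, ?_⟩
    · have hlt : ⌊w i j k + 1⌋ < v k + 2 := by
        rw [Int.floor_lt]
        push_cast
        linarith [(hwx k).1, (hvx k).2]
      omega
    · rw [Int.le_floor]
      linarith [(hvx k).1, (hwx k).2]
  -- count of frontier cubes
  have hcount : ((F.filter fun v => (C v ∩ frontier S).Nonempty).card : ℝ)
      ≤ 2 ^ n * ∑ i, (m i : ℝ) := by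
    have h1 : (F.filter fun v => (C v ∩ frontier S).Nonempty).card
        ≤ ∑ p : Σ i, Fin (m i), (G p).card :=
      le_trans (Finset.card_le_card hBsub) (Finset.card_biUnion_le)
    have h2 : ∑ p : Σ i, Fin (m i), (G p).card ≤ ∑ _p : Σ i, Fin (m i), 2 ^ n :=
      Finset.sum_le_sum fun p _ => hGcard p
    have h3 : ∑ _p : Σ i, Fin (m i), 2 ^ n = (∑ i, m i) * 2 ^ n := by
      rw [Finset.sum_const, Finset.card_univ, Fintype.card_sigma]
      simp [Fintype.card_fin]
    have : (F.filter fun v => (C v ∩ frontier S).Nonempty).card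
        ≤ (∑ i, m i) * 2 ^ n := le_trans h1 (le_trans h2 (le_of_eq h3))
    calc ((F.filter fun v => (C v ∩ frontier S).Nonempty).card : ℝ)
        ≤ ((∑ i, m i) * 2 ^ n : ℕ) := by exact_mod_cast this
      _ = 2 ^ n * ∑ i, (m i : ℝ) := by push_cast; ring
  -- assemble
  rw [hAcard, hsum_b, ← Finset.sum_sub_distrib]
  calc |∑ v ∈ F, (a v - b v)| ≤ ∑ v ∈ F, |a v - b v| := Finset.abs_sum_le_sum_abs _ _
    _ ≤ ∑ v ∈ F, (if (C v ∩ frontier S).Nonempty then (1:ℝ) else 0) :=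
        Finset.sum_le_sum hterm
    _ = ((F.filter fun v => (C v ∩ frontier S).Nonempty).card : ℝ) := by
        rw [Finset.sum_boole]
    _ ≤ 2 ^ n * ∑ i, (m i : ℝ) := hcount
end

section
/- For d = 2 and any integer t, the number of reducible monic integer quadratics z² + t z + c with Mahler measure at most T ≥ 1 (equivalently, the number of integers c such that z² + tz + c factors over ℤ and has Mahler measure ≤ T) is at most (1/2)√(t² + 4T) + 1. -/
/-- The number of reducible monic integer quadratics `z² + tz + c` of Mahler measure
at most `T` (equivalently, the number of integers `c` such that `z² + tz + c` factors
as `(z+x)(z+y)` over `ℤ` with `max(1,|x|)·max(1,|y|) ≤ T`) is at most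
`(1/2)√(t² + 4T) + 1`. -/
theorem stmt_18 (t : ℤ) (T : ℝ) (hT : 1 ≤ T) :
    ({c : ℤ | ∃ x y : ℤ, x + y = t ∧ x * y = c ∧
        max 1 (|x| : ℝ) * max 1 (|y| : ℝ) ≤ T}.ncard : ℝ) ≤
      (1 / 2) * Real.sqrt ((t : ℝ) ^ 2 + 4 * T) + 1 := by
  set Q : ℝ := (t : ℝ) ^ 2 + 4 * T with hQdef
  have hQ4 : (4 : ℝ) ≤ Q := by nlinarith [sq_nonneg (t : ℝ)]
  have hQ0 : (0 : ℝ) ≤ Q := by linarith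
  have hs2 : (2 : ℝ) ≤ Real.sqrt Q := by
    have : Real.sqrt 4 ≤ Real.sqrt Q := Real.sqrt_le_sqrt hQ4
    have h4 : Real.sqrt 4 = 2 := by
      rw [show (4 : ℝ) = 2 ^ 2 by norm_num, Real.sqrt_sq (by norm_num : (0:ℝ) ≤ 2)]
    linarith [h4 ▸ this]
  set M : ℤ := ⌊Real.sqrt Q / 2⌋ with hMdef
  have hM0 : (0 : ℤ) ≤ M := Int.le_floor.mpr (by push_cast; linarith)
  set r : ℤ := t % 2 with hrdef
  have hr0 : 0 ≤ r := Int.emod_nonneg t (by norm_num)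
  have hr2 : r < 2 := Int.emod_lt_of_pos t (by norm_num)
  have hrt : 2 ∣ t - r := Int.dvd_self_sub_of_emod_eq rfl
  have hsub : {c : ℤ | ∃ x y : ℤ, x + y = t ∧ x * y = c ∧
        max 1 (|x| : ℝ) * max 1 (|y| : ℝ) ≤ T} ⊆
      ↑((Finset.Icc (0 : ℤ) M).image (fun j => (t ^ 2 - (r + 2 * j) ^ 2) / 4)) := by
    rintro c ⟨x, y, hxy, hc, hmm⟩
    simp only [Finset.coe_image, Set.mem_image, Finset.mem_coe, Finset.mem_Icc]
    set s : ℤ := |x - y| with hsdef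
    have hs0 : 0 ≤ s := abs_nonneg _
    have hssq : s ^ 2 = t ^ 2 - 4 * c := by
      rw [hsdef, sq_abs]; rw [← hxy, ← hc]; ring
    have hcT : (|c| : ℝ) ≤ T := by
      have h1 : (|c| : ℝ) = |(x : ℝ)| * |(y : ℝ)| := by
        rw [← abs_mul, ← hc]; push_cast; ring_nf
      have h2 : |(x : ℝ)| * |(y : ℝ)| ≤ max 1 |(x : ℝ)| * max 1 |(y : ℝ)| :=
        mul_le_mul (le_max_right _ _) (le_max_right _ _) (abs_nonneg _)
          (le_trans zero_le_one (le_max_left _ _))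
      linarith [h1 ▸ (h2.trans hmm)]
    have hsQ : (s : ℝ) ≤ Real.sqrt Q := by
      have h1 : ((s : ℝ)) ^ 2 ≤ Q := by
        have := hssq
        have hcb : -(T : ℝ) ≤ (c : ℝ) := by
          have := abs_le.mp (show |(c : ℝ)| ≤ T by push_cast at hcT ⊢; exact_mod_cast hcT)
          linarith [this.1]
        have h2 : ((s : ℝ)) ^ 2 = (t : ℝ) ^ 2 - 4 * (c : ℝ) := by exact_mod_cast hssq
        rw [h2, hQdef]; linarith
      calc (s : ℝ) = Real.sqrt ((s : ℝ) ^ 2) := by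
            rw [Real.sqrt_sq (by exact_mod_cast hs0)]
        _ ≤ Real.sqrt Q := Real.sqrt_le_sqrt h1
    have hpar : 2 ∣ s - r := by
      have h1 : 2 ∣ s - (x - y) := by
        rcases abs_choice (x - y) with h | h <;> rw [hsdef, h]
        · exact ⟨0, by ring⟩
        · exact ⟨-(x - y), by ring⟩
      have h2 : 2 ∣ (x - y) - t := ⟨-y, by rw [← hxy]; ring⟩
      have : 2 ∣ s - t := by
        have := dvd_add h1 h2; simpa using this
      have := dvd_add this hrt
      simpa using this
    obtain ⟨k, hk⟩ := hpar
    refine ⟨k, ⟨by omega, ?_⟩, ?_⟩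
    · -- k ≤ M
      apply Int.le_floor.mpr
      have h2k : (2 : ℝ) * (k : ℝ) ≤ Real.sqrt Q := by
        have : 2 * k = s - r := by omega
        have hrr : (0 : ℝ) ≤ (r : ℝ) := by exact_mod_cast hr0
        have : (2 : ℝ) * (k : ℝ) = (s : ℝ) - (r : ℝ) := by exact_mod_cast this
        linarith
      push_cast
      linarith
    · have hs' : r + 2 * k = s := by omega
      have h4c : t ^ 2 - s ^ 2 = 4 * c := by linarith [hssq]
      simp only [hs', h4c]
      omega
  have hfin : (↑((Finset.Icc (0 : ℤ) M).image (fun j => (t ^ 2 - (r + 2 * j) ^ 2) / 4)) : Set ℤ).Finite :=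
    (Finset.finite_toSet _)
  have hcard : ({c : ℤ | ∃ x y : ℤ, x + y = t ∧ x * y = c ∧
        max 1 (|x| : ℝ) * max 1 (|y| : ℝ) ≤ T}).ncard ≤
      ((Finset.Icc (0 : ℤ) M).image (fun j => (t ^ 2 - (r + 2 * j) ^ 2) / 4)).card := by
    calc _ ≤ (↑((Finset.Icc (0 : ℤ) M).image (fun j => (t ^ 2 - (r + 2 * j) ^ 2) / 4)) : Set ℤ).ncard :=
          Set.ncard_le_ncard hsub hfin
      _ = _ := Set.ncard_coe_finset _
  have hcard2 : ((Finset.Icc (0 : ℤ) M).image (fun j => (t ^ 2 - (r + 2 * j) ^ 2) / 4)).card ≤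
      (M + 1).toNat := by
    calc _ ≤ (Finset.Icc (0 : ℤ) M).card := Finset.card_image_le
      _ = (M + 1 - 0).toNat := Int.card_Icc 0 M
      _ = (M + 1).toNat := by ring_nf
  have hMle : (M : ℝ) ≤ Real.sqrt Q / 2 := Int.floor_le _
  have hfinal : ({c : ℤ | ∃ x y : ℤ, x + y = t ∧ x * y = c ∧
        max 1 (|x| : ℝ) * max 1 (|y| : ℝ) ≤ T}).ncard ≤ (M + 1).toNat :=
    le_trans hcard hcard2
  have : (((M + 1).toNat : ℤ) : ℝ) = (M : ℝ) + 1 := by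
    rw [Int.toNat_of_nonneg (by omega)]; push_cast; ring
  calc (({c : ℤ | ∃ x y : ℤ, x + y = t ∧ x * y = c ∧
        max 1 (|x| : ℝ) * max 1 (|y| : ℝ) ≤ T}).ncard : ℝ) ≤ ((M + 1).toNat : ℝ) := by
        exact_mod_cast hfinal
    _ = (M : ℝ) + 1 := by exact_mod_cast this
    _ ≤ Real.sqrt Q / 2 + 1 := by linarith
    _ = (1 / 2) * Real.sqrt Q + 1 := by ring
end

section
/- For every nonnegative integer d and real T > 0, the number of integer vectors (w_0,…,w_d) ∈ ℤ^{d+1} with Mahler measure μ(w) ≤ T is at most ∏_{j=0}^{d} (2·binomial(d,j)·T + 1), and hence (for T ≥ 1) at most (3159/1024) · 2^{d+1} · P(d) · T^{d+1}, where P(d) = ∏_{j=0}^d binomial(d,j). -/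
open Polynomial Finset

/-- The Mahler measure of a complex polynomial. -/
noncomputable def mahlerMeasC (f : Polynomial ℂ) : ℝ :=
  ‖f.leadingCoeff‖ * (f.roots.map fun α => max 1 ‖α‖).prod

/-- The Mahler measure of a real polynomial, via its complex roots. -/
noncomputable def mahlerMeasR (f : Polynomial ℝ) : ℝ :=
  mahlerMeasC (f.map (algebraMap ℝ ℂ))

/-- The Mahler measure of the coefficient vector `w = (w_0, …, w_d) ∈ ℝ^{d+1}`,
identified with the polynomial `w_0 z^d + ⋯ + w_d`. -/
noncomputable def mahlerVec (d : ℕ) (w : Fin (d + 1) → ℝ) : ℝ :=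
  mahlerMeasR (∑ i : Fin (d + 1), Polynomial.C (w i) * Polynomial.X ^ (d - (i : ℕ)))

lemma aux_one_le_prod_max (u : Multiset ℂ) :
    1 ≤ (u.map fun a => max 1 (‖a‖)).prod := by
  induction u using Multiset.induction_on with
  | empty => simp
  | cons a t ih =>
    simp only [Multiset.map_cons, Multiset.prod_cons]
    nlinarith [le_max_left 1 (‖a‖)]

lemma aux_prod_max_nonneg (u : Multiset ℂ) :
    0 ≤ (u.map fun a => max 1 (‖a‖)).prod :=
  le_trans zero_le_one (aux_one_le_prod_max u)

lemma mahlerMeasC_nonneg (f : Polynomial ℂ) : 0 ≤ mahlerMeasC f :=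
  mul_nonneg (norm_nonneg _) (aux_prod_max_nonneg _)

lemma aux_abs_prod (t : Multiset ℂ) :
    ‖t.prod‖ = (t.map fun a => ‖a‖).prod := by
  induction t using Multiset.induction_on with
  | empty => simp
  | cons a t ih => simp [ih]

lemma aux_prod_abs_nonneg (t : Multiset ℂ) : 0 ≤ (t.map fun a => ‖a‖).prod := by
  apply Multiset.prod_nonneg
  intro x hx
  obtain ⟨y, _, rfl⟩ := Multiset.mem_map.mp hx
  exact norm_nonneg _

lemma aux_prod_abs_le (t : Multiset ℂ) :
    (t.map fun a => ‖a‖).prod ≤ (t.map fun a => max 1 (‖a‖)).prod := by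
  induction t using Multiset.induction_on with
  | empty => simp
  | cons a t ih =>
    simp only [Multiset.map_cons, Multiset.prod_cons]
    have h2 := aux_prod_max_nonneg t
    have h3 := aux_prod_abs_nonneg t
    have h4 := norm_nonneg a
    nlinarith [le_max_right 1 (‖a‖), le_max_left 1 (‖a‖)]

lemma aux_prod_le (t s : Multiset ℂ) (h : t ≤ s) :
    ‖t.prod‖ ≤ (s.map fun a => max 1 (‖a‖)).prod := by
  obtain ⟨u, rfl⟩ := Multiset.le_iff_exists_add.mp h
  rw [aux_abs_prod, Multiset.map_add, Multiset.prod_add]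
  exact le_trans (aux_prod_abs_le t)
    (le_mul_of_one_le_right (aux_prod_max_nonneg t) (aux_one_le_prod_max u))

lemma aux_esymm_bound (s : Multiset ℂ) (m : ℕ) :
    ‖s.esymm m‖ ≤ ((Multiset.card s).choose m : ℝ) *
      (s.map fun a => max 1 (‖a‖)).prod := by
  rw [Multiset.esymm]
  set B := (s.map fun a => max 1 (‖a‖)).prod with hB
  calc ‖(Multiset.map Multiset.prod (s.powersetCard m)).sum‖
      ≤ ((Multiset.map Multiset.prod (s.powersetCard m)).map (fun z => ‖z‖)).sum := by
        simpa using
          norm_multiset_sum_le ((Multiset.map Multiset.prod (s.powersetCard m)))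
    _ ≤ (Multiset.card ((Multiset.map Multiset.prod (s.powersetCard m)).map
          (fun z => ‖z‖))) • B := by
        apply Multiset.sum_le_card_nsmul
        intro x hx
        simp only [Multiset.mem_map] at hx
        obtain ⟨z, ⟨t, ht, rfl⟩, rfl⟩ := hx
        exact aux_prod_le t s (Multiset.mem_powersetCard.mp ht).1
    _ = ((Multiset.card s).choose m : ℝ) * B := by
        simp [Multiset.card_powersetCard, nsmul_eq_mul]

theorem mahler_coeff (f : Polynomial ℂ) (k : ℕ) :
    ‖f.coeff k‖ ≤ (f.natDegree.choose k : ℝ) * mahlerMeasC f := by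
  by_cases hf : f = 0
  · simp [hf, mahlerMeasC]
  by_cases hk : k ≤ f.natDegree
  · have hsplit : f.Splits := IsAlgClosed.splits f
    have hcard : Multiset.card f.roots = f.natDegree := (splits_iff_card_roots.mp hsplit)
    rw [Polynomial.coeff_eq_esymm_roots_of_card hcard hk]
    rw [norm_mul, norm_mul, norm_pow]
    simp only [norm_neg, norm_one, one_pow, mul_one]
    calc ‖f.leadingCoeff‖ * ‖f.roots.esymm (f.natDegree - k)‖
        ≤ ‖f.leadingCoeff‖ * (((Multiset.card f.roots).choose (f.natDegree - k) : ℝ) *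
          (f.roots.map fun a => max 1 (‖a‖)).prod) := by
          apply mul_le_mul_of_nonneg_left (aux_esymm_bound _ _) (norm_nonneg _)
      _ = (f.natDegree.choose (f.natDegree - k) : ℝ) * mahlerMeasC f := by
          rw [hcard, mahlerMeasC]; ring
      _ = (f.natDegree.choose k : ℝ) * mahlerMeasC f := by
          rw [Nat.choose_symm hk]
  · rw [Polynomial.coeff_eq_zero_of_natDegree_lt (lt_of_not_ge hk)]
    simp only [norm_zero]
    exact mul_nonneg (Nat.cast_nonneg _) (mahlerMeasC_nonneg f)


lemma aux_coeff_vec (d : ℕ) (w : Fin (d + 1) → ℝ) (j : Fin (d + 1)) :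
    (∑ i : Fin (d + 1), Polynomial.C (w i) * Polynomial.X ^ (d - (i : ℕ))).coeff
      (d - (j : ℕ)) = w j := by
  rw [Polynomial.finset_sum_coeff]
  rw [Finset.sum_eq_single j]
  · simp [Polynomial.coeff_C_mul, Polynomial.coeff_X_pow]
  · intro i _ hij
    have h1 : (i : ℕ) < d + 1 := i.isLt
    have h2 : (j : ℕ) < d + 1 := j.isLt
    have h3 : (i : ℕ) ≠ (j : ℕ) := fun h => hij (Fin.ext h)
    simp only [Polynomial.coeff_C_mul, Polynomial.coeff_X_pow]
    rw [if_neg (by omega)]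
    simp
  · intro h; exact absurd (Finset.mem_univ j) h

lemma aux_natDeg_le (d : ℕ) (w : Fin (d + 1) → ℝ) :
    (∑ i : Fin (d + 1), Polynomial.C (w i) * Polynomial.X ^ (d - (i : ℕ))).natDegree ≤ d := by
  apply Polynomial.natDegree_sum_le_of_forall_le
  intro i _
  exact le_trans (Polynomial.natDegree_C_mul_le _ _) (by simp [Polynomial.natDegree_X_pow]
    : (Polynomial.X ^ (d - (i:ℕ)) : Polynomial ℝ).natDegree ≤ d)

lemma aux_coord_bound (d : ℕ) (w : Fin (d + 1) → ℝ) (j : Fin (d + 1)) :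
    |w j| ≤ (d.choose (j : ℕ) : ℝ) * mahlerVec d w := by
  set p := ∑ i : Fin (d + 1), Polynomial.C (w i) * Polynomial.X ^ (d - (i : ℕ)) with hp
  set q := p.map (algebraMap ℝ ℂ) with hq
  have hμ : mahlerVec d w = mahlerMeasC q := rfl
  have hcoeff : q.coeff (d - (j : ℕ)) = ((w j : ℝ) : ℂ) := by
    rw [hq, Polynomial.coeff_map, aux_coeff_vec]; rfl
  have hdeg : q.natDegree ≤ d := le_trans Polynomial.natDegree_map_le (aux_natDeg_le d w)
  have := mahler_coeff q (d - (j : ℕ))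
  rw [hcoeff] at this
  rw [Complex.norm_real, Real.norm_eq_abs] at this
  have hμ0 : 0 ≤ mahlerMeasC q := mahlerMeasC_nonneg q
  have hch : (q.natDegree.choose (d - (j : ℕ)) : ℝ) ≤ (d.choose (d - (j : ℕ)) : ℝ) := by
    exact_mod_cast Nat.choose_le_choose _ hdeg
  have hjd : (j : ℕ) ≤ d := by omega
  calc |w j| ≤ (q.natDegree.choose (d - (j : ℕ)) : ℝ) * mahlerMeasC q := this
    _ ≤ (d.choose (d - (j : ℕ)) : ℝ) * mahlerMeasC q := by
        apply mul_le_mul_of_nonneg_right hch hμ0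
    _ = (d.choose (j : ℕ) : ℝ) * mahlerVec d w := by rw [Nat.choose_symm hjd, hμ]


theorem count_bound (d : ℕ) (T : ℝ) (hT : 0 < T) :
    (({w : Fin (d + 1) → ℤ | mahlerVec d (fun i => (w i : ℝ)) ≤ T}.ncard : ℝ) ≤
        ∏ j ∈ Finset.range (d + 1), (2 * (d.choose j : ℝ) * T + 1)) := by
  set S := {w : Fin (d + 1) → ℤ | mahlerVec d (fun i => (w i : ℝ)) ≤ T} with hS
  set M : Fin (d + 1) → ℤ := fun j => ⌊(d.choose (j : ℕ) : ℝ) * T⌋ with hM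
  set F : Finset (Fin (d + 1) → ℤ) := Fintype.piFinset fun j => Finset.Icc (-(M j)) (M j) with hF
  have hM0 : ∀ j, 0 ≤ M j := by
    intro j
    apply Int.le_floor.mpr
    push_cast
    positivity
  have hMle : ∀ j, (M j : ℝ) ≤ (d.choose (j : ℕ) : ℝ) * T := fun j => Int.floor_le _
  have hsub : S ⊆ (F : Set (Fin (d + 1) → ℤ)) := by
    intro w hw
    simp only [hF, Finset.coe_sort_coe, Finset.mem_coe, Fintype.mem_piFinset, Finset.mem_Icc]
    intro j
    have hb := aux_coord_bound d (fun i => (w i : ℝ)) j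
    have hb2 : |(w j : ℝ)| ≤ (d.choose (j : ℕ) : ℝ) * T := by
      calc |(w j : ℝ)| ≤ (d.choose (j : ℕ) : ℝ) * mahlerVec d (fun i => (w i : ℝ)) := hb
        _ ≤ (d.choose (j : ℕ) : ℝ) * T :=
            mul_le_mul_of_nonneg_left hw (Nat.cast_nonneg _)
    constructor
    · rw [neg_le]
      apply Int.le_floor.mpr
      push_cast
      exact le_trans (neg_le_abs _) hb2
    · apply Int.le_floor.mpr
      exact le_trans (le_abs_self _) hb2
  have hcard : S.ncard ≤ F.card := by
    have h1 := Set.ncard_le_ncard hsub F.finite_toSet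
    rwa [Set.ncard_coe_finset] at h1
  have hFcard : F.card = ∏ j : Fin (d + 1), (M j - -(M j) + 1).toNat := by
    rw [hF, Fintype.card_piFinset]
    congr 1
    ext j
    rw [Int.card_Icc]
    congr 1
    ring
  calc (S.ncard : ℝ) ≤ (F.card : ℝ) := by exact_mod_cast hcard
    _ = ∏ j : Fin (d + 1), ((M j - -(M j) + 1).toNat : ℝ) := by
        rw [hFcard]; rw [Nat.cast_prod]
    _ ≤ ∏ j : Fin (d + 1), (2 * (d.choose (j : ℕ) : ℝ) * T + 1) := by
        apply Finset.prod_le_prod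
        · intro j _; positivity
        · intro j _
          have hj := hM0 j
          have hnn : (0 : ℤ) ≤ M j - -(M j) + 1 := by omega
          have h2 : ((M j - -(M j) + 1).toNat : ℤ) = 2 * M j + 1 := by omega
          have : ((M j - -(M j) + 1).toNat : ℝ) = 2 * (M j : ℝ) + 1 := by
            exact_mod_cast congrArg (fun z : ℤ => (z : ℝ)) h2
          rw [this]
          have := hMle j
          linarith
    _ = ∏ j ∈ Finset.range (d + 1), (2 * (d.choose j : ℝ) * T + 1) := by
        rw [Fin.prod_univ_eq_prod_range (fun j => 2 * (d.choose j : ℝ) * T + 1)]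


lemma aux_choose_le_of_le_half {n r : ℕ} : ∀ {s : ℕ}, r ≤ s → s ≤ n / 2 →
    n.choose r ≤ n.choose s := by
  intro s
  induction s using Nat.strong_induction_on with
  | _ s ih =>
    intro hrs hs
    rcases Nat.eq_or_lt_of_le hrs with rfl | hlt
    · exact le_rfl
    · obtain ⟨t, rfl⟩ : ∃ t, s = t + 1 := ⟨s - 1, by omega⟩
      calc n.choose r ≤ n.choose t := ih t (by omega) (by omega) (by omega)
        _ ≤ n.choose (t + 1) := Nat.choose_le_succ_of_lt_half_left (by omega)

lemma aux_mid_lower (d j : ℕ) (h2 : 2 ≤ j) (hj : j ≤ d - 2) (hd : 4 ≤ d) :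
    d * (d - 1) ≤ 2 * d.choose j := by
  have key : d.choose 2 ≤ d.choose j := by
    rcases le_or_gt j (d / 2) with h | h
    · exact aux_choose_le_of_le_half h2 h
    · have hjd : j ≤ d := by omega
      have h4 : d.choose 2 ≤ d.choose (d - j) := aux_choose_le_of_le_half (by omega) (by omega)
      rwa [Nat.choose_symm hjd] at h4
  have hdvd : 2 ∣ d * (d - 1) := by
    rcases Nat.even_or_odd d with h | h
    · exact Dvd.dvd.mul_right h.two_dvd _
    · obtain ⟨k, hk⟩ := h
      exact Dvd.dvd.mul_left (⟨k, by omega⟩ : (2:ℕ) ∣ (d-1)) _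
  have h22 : 2 * d.choose 2 = d * (d - 1) := by
    rw [Nat.choose_two_right]
    exact Nat.mul_div_cancel' hdvd
  calc d * (d - 1) = 2 * d.choose 2 := h22.symm
    _ ≤ 2 * d.choose j := Nat.mul_le_mul_left 2 key

lemma aux_prod_one_add {ι : Type*} (s : Finset ι) (x : ι → ℝ)
    (hx : ∀ i ∈ s, 0 ≤ x i) (hs : ∑ i ∈ s, x i < 1) :
    ∏ i ∈ s, (1 + x i) ≤ (1 - ∑ i ∈ s, x i)⁻¹ := by
  induction s using Finset.cons_induction with
  | empty => simp
  | cons a s ha ih =>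
    rw [Finset.sum_cons] at hs ⊢
    rw [Finset.prod_cons]
    have hxa : 0 ≤ x a := hx a (Finset.mem_cons_self a s)
    have hxs : ∀ i ∈ s, 0 ≤ x i := fun i hi => hx i (Finset.mem_cons_of_mem hi)
    have hA : 0 ≤ ∑ i ∈ s, x i := Finset.sum_nonneg hxs
    have hs' : ∑ i ∈ s, x i < 1 := by linarith
    have h1 : (0:ℝ) < 1 - ∑ i ∈ s, x i := by linarith
    have h2 : (0:ℝ) < 1 - (x a + ∑ i ∈ s, x i) := by linarith
    calc (1 + x a) * ∏ i ∈ s, (1 + x i)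
        ≤ (1 + x a) * (1 - ∑ i ∈ s, x i)⁻¹ :=
          mul_le_mul_of_nonneg_left (ih hxs hs') (by linarith)
      _ ≤ (1 - (x a + ∑ i ∈ s, x i))⁻¹ := by
          have key : (1 + x a) / (1 - ∑ i ∈ s, x i) ≤ 1 / (1 - (x a + ∑ i ∈ s, x i)) := by
            rw [div_le_div_iff₀ h1 h2]
            nlinarith
          rw [← div_eq_mul_inv, inv_eq_one_div]
          exact key

lemma key_prod_bound (d : ℕ) :
    ∏ j ∈ Finset.range (d + 1), (2 * (d.choose j : ℝ) + 1) ≤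
      (3159 / 1024 : ℝ) * 2 ^ (d + 1) * (P d : ℝ) := by
  have hP : (2:ℝ) ^ (d+1) * (P d : ℝ) = ∏ j ∈ Finset.range (d + 1), (2 * (d.choose j : ℝ)) := by
    rw [Finset.prod_mul_distrib, Finset.prod_const, Finset.card_range, P]
    push_cast
    ring
  rcases le_or_gt d 7 with hd | hd
  · interval_cases d <;> norm_num [P, Finset.prod_range_succ, Nat.choose]
  · obtain ⟨e, rfl⟩ : ∃ e, d = e + 8 := ⟨d - 8, by omega⟩
    set f : ℕ → ℝ := fun j => 2 * ((e+8).choose j : ℝ) + 1 with hf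
    set g : ℕ → ℝ := fun j => 2 * ((e+8).choose j : ℝ) with hg
    have hsplit : ∀ h : ℕ → ℝ, ∏ j ∈ Finset.range (e + 8 + 1), h j =
        (∏ i ∈ Finset.range (e + 5), h (i + 2)) * h 1 * h 0 * h (e + 7) * h (e + 8) := by
      intro h
      rw [show e + 8 + 1 = (e + 7) + 1 + 1 from rfl, Finset.prod_range_succ,
        Finset.prod_range_succ, Finset.prod_range_succ', Finset.prod_range_succ']
      try ring
    rw [hsplit f]
    rw [show (3159/1024:ℝ) * 2^(e+8+1) * ((P (e+8) : ℕ):ℝ) =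
      (3159/1024:ℝ) * (2^(e+8+1) * ((P (e+8) : ℕ):ℝ)) from by ring, hP, hsplit g]
    set x : ℕ → ℝ := fun i => 1 / (2 * ((e+8).choose (i + 2) : ℝ)) with hx
    have hcpos : ∀ i ∈ Finset.range (e + 5), (0:ℝ) < 2 * ((e+8).choose (i + 2) : ℝ) := by
      intro i hi
      have : 0 < (e+8).choose (i+2) := Nat.choose_pos (by simp at hi; omega)
      positivity
    have hfg : ∀ i ∈ Finset.range (e + 5), f (i + 2) = g (i + 2) * (1 + x i) := by
      intro i hi
      have h0 := hcpos i hi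
      rw [hf, hg, hx]
      field_simp
      rw [mul_add, mul_one_div_cancel (ne_of_gt (by linarith))]; ring
    have hxnn : ∀ i ∈ Finset.range (e + 5), 0 ≤ x i := by
      intro i hi
      have := hcpos i hi
      positivity
    have hsum : ∑ i ∈ Finset.range (e + 5), x i ≤ 1 / 8 := by
      have hterm : ∀ i ∈ Finset.range (e + 5), x i ≤ 1 / (((e:ℝ)+8) * ((e:ℝ)+7)) := by
        intro i hi
        simp only [Finset.mem_range] at hi
        have hml := aux_mid_lower (e+8) (i+2) (by omega) (by omega) (by omega)
        have hml' : ((e:ℝ)+8) * ((e:ℝ)+7) ≤ 2 * ((e+8).choose (i + 2) : ℝ) := by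
          have : ((e+8) * (e+8-1) : ℕ) ≤ (2 * (e+8).choose (i+2) : ℕ) := hml
          calc ((e:ℝ)+8) * ((e:ℝ)+7) = (((e+8) * (e+8-1) : ℕ) : ℝ) := by
                push_cast [show e+8-1 = e+7 from rfl]; ring
            _ ≤ ((2 * (e+8).choose (i+2) : ℕ) : ℝ) := by exact_mod_cast this
            _ = 2 * ((e+8).choose (i + 2) : ℝ) := by push_cast; ring
        rw [hx]
        apply one_div_le_one_div_of_le
        · positivity
        · exact hml'
      calc ∑ i ∈ Finset.range (e + 5), x i
          ≤ ∑ _i ∈ Finset.range (e + 5), 1 / (((e:ℝ)+8) * ((e:ℝ)+7)) :=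
            Finset.sum_le_sum hterm
        _ = ((e:ℝ) + 5) / (((e:ℝ)+8) * ((e:ℝ)+7)) := by
            rw [Finset.sum_const, Finset.card_range]; push_cast; ring
        _ ≤ 1 / 8 := by
            rw [div_le_div_iff₀ (by positivity) (by norm_num)]
            have he : (0:ℝ) ≤ (e:ℝ) := Nat.cast_nonneg e
            nlinarith
    have hmid : ∏ i ∈ Finset.range (e + 5), f (i + 2) ≤
        (∏ i ∈ Finset.range (e + 5), g (i + 2)) * (8 / 7) := by
      rw [Finset.prod_congr rfl hfg, Finset.prod_mul_distrib]
      apply mul_le_mul_of_nonneg_left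
      · calc ∏ i ∈ Finset.range (e + 5), (1 + x i)
            ≤ (1 - ∑ i ∈ Finset.range (e + 5), x i)⁻¹ :=
              aux_prod_one_add _ _ hxnn (by linarith)
          _ ≤ 8 / 7 := by
              rw [show (8:ℝ)/7 = (7/8 : ℝ)⁻¹ by norm_num]
              apply inv_anti₀ (by norm_num)
              linarith
      · exact Finset.prod_nonneg fun i hi => le_of_lt (hcpos i hi)
    -- endpoint values
    have hf0 : f 0 = 3 := by norm_num [hf]
    have hfd : f (e + 8) = 3 := by norm_num [hf]
    have hf1 : f 1 = 2 * ((e:ℝ) + 8) + 1 := by simp [hf]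
    have hf7 : f (e + 7) = 2 * ((e:ℝ) + 8) + 1 := by
      rw [hf]
      simp only []
      rw [show (e+8).choose (e+7) = e + 8 from Nat.choose_succ_self_right (e+7)]
      push_cast; ring
    have hg0 : g 0 = 2 := by simp [hg]
    have hgd : g (e + 8) = 2 := by simp [hg]
    have hg1 : g 1 = 2 * ((e:ℝ) + 8) := by simp [hg]
    have hg7 : g (e + 7) = 2 * ((e:ℝ) + 8) := by
      rw [hg]
      simp only []
      rw [show (e+8).choose (e+7) = e + 8 from Nat.choose_succ_self_right (e+7)]
      push_cast; ring
    rw [hf0, hfd, hf1, hf7, hg0, hgd, hg1, hg7]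
    set Mf := ∏ i ∈ Finset.range (e + 5), f (i + 2) with hMf
    set Mg := ∏ i ∈ Finset.range (e + 5), g (i + 2) with hMg
    have hMg0 : 0 ≤ Mg := Finset.prod_nonneg fun i hi => le_of_lt (hcpos i hi)
    have he : (0:ℝ) ≤ (e:ℝ) := Nat.cast_nonneg e
    nlinarith [mul_le_mul_of_nonneg_right hmid (by positivity : (0:ℝ) ≤ (2 * ((e:ℝ) + 8) + 1)^2 * 9),
      mul_nonneg hMg0 he, sq_nonneg ((e:ℝ)+8)]

/-- The number of integer coefficient vectors of degree-`≤ d` polynomials of Mahler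
measure at most `T` is at most `∏_{j=0}^d (2 C(d,j) T + 1)`, and hence for `T ≥ 1`
at most `(3159/1024)·2^{d+1}·P(d)·T^{d+1}`. -/
theorem stmt_19 (d : ℕ) (T : ℝ) (hT : 0 < T) :
    (({w : Fin (d + 1) → ℤ | mahlerVec d (fun i => (w i : ℝ)) ≤ T}.ncard : ℝ) ≤
        ∏ j ∈ Finset.range (d + 1), (2 * (d.choose j : ℝ) * T + 1)) ∧
      (1 ≤ T →
        ({w : Fin (d + 1) → ℤ | mahlerVec d (fun i => (w i : ℝ)) ≤ T}.ncard : ℝ) ≤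
          (3159 / 1024 : ℝ) * 2 ^ (d + 1) * (P d : ℝ) * T ^ (d + 1)) := by
  have h1 := count_bound d T hT
  refine ⟨h1, fun hT1 => ?_⟩
  calc ({w : Fin (d + 1) → ℤ | mahlerVec d (fun i => (w i : ℝ)) ≤ T}.ncard : ℝ)
      ≤ ∏ j ∈ Finset.range (d + 1), (2 * (d.choose j : ℝ) * T + 1) := h1
    _ ≤ ∏ j ∈ Finset.range (d + 1), ((2 * (d.choose j : ℝ) + 1) * T) := by
        apply Finset.prod_le_prod
        · intro j _; positivity
        · intro j _
          have h0 : (0:ℝ) ≤ (d.choose j : ℝ) := Nat.cast_nonneg _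
          nlinarith
    _ = (∏ j ∈ Finset.range (d + 1), (2 * (d.choose j : ℝ) + 1)) * T ^ (d + 1) := by
        rw [Finset.prod_mul_distrib, Finset.prod_const, Finset.card_range]
    _ ≤ (3159 / 1024 : ℝ) * 2 ^ (d + 1) * (P d : ℝ) * T ^ (d + 1) :=
        mul_le_mul_of_nonneg_right (key_prod_bound d) (by positivity)
end
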